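/- arXiv:1010.5159 — 5 statements merged into one kernel-verified Lean document; each statement's English description precedes it below -/
import Mathlib

section
/- If f, g : [0,1] → ℝ are bounded measurable functions such that ∫₀¹ f^k = ∫₀¹ g^k for all natural numbers k, then there exist a bounded measurable function h : [0,1] → ℝ and measure-preserving maps φ, ψ : [0,1] → [0,1] such that f(x) = h(φ(x)) and g(x) = h(ψ(x)) for almost all x. -/
open MeasureTheory Set Filter
open scoped ENNReal NNReal Topology

/-- Lebesgue measure restricted to the unit interval. -/
noncomputable def muI : Measure ℝ := volume.restrict (Set.Icc (0:ℝ) 1)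

lemma muI_apply (s : Set ℝ) : muI s = volume (s ∩ Icc (0:ℝ) 1) :=
  Measure.restrict_apply' measurableSet_Icc

instance : IsProbabilityMeasure muI := by
  constructor
  rw [muI_apply, univ_inter, Real.volume_Icc]
  norm_num

lemma muI_null {s : Set ℝ} (h : ∀ x ∈ Icc (0:ℝ) 1, x ∉ s) : muI s = 0 := by
  rw [muI_apply]
  convert measure_empty (μ := (volume : Measure ℝ))
  ext x; simp only [mem_inter_iff, mem_empty_iff_false, iff_false, not_and]
  exact fun hx hx' => h x hx' hx

lemma muI_full {s : Set ℝ} (h : ∀ x ∈ Icc (0:ℝ) 1, x ∈ s) : muI s = 1 := by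
  rw [muI_apply]
  have : s ∩ Icc (0:ℝ) 1 = Icc 0 1 := by
    exact inter_eq_self_of_subset_right (fun x hx => h x hx)
  rw [this, Real.volume_Icc]; norm_num

lemma muI_le_volume (s : Set ℝ) : muI s ≤ volume s :=
  Measure.restrict_le_self s

lemma muI_Lip {E : Set ℝ} {x y : ℝ} :
    muI (E ∩ Iic y) ≤ muI (E ∩ Iic x) + ENNReal.ofReal (y - x) := by
  have : E ∩ Iic y ⊆ (E ∩ Iic x) ∪ Ioc x y := by
    intro z ⟨hz1, hz2⟩
    by_cases h : z ≤ x
    · exact Or.inl ⟨hz1, h⟩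
    · exact Or.inr ⟨lt_of_not_ge h, hz2⟩
  calc muI (E ∩ Iic y) ≤ muI ((E ∩ Iic x) ∪ Ioc x y) := measure_mono this
    _ ≤ muI (E ∩ Iic x) + muI (Ioc x y) := measure_union_le _ _
    _ ≤ muI (E ∩ Iic x) + ENNReal.ofReal (y - x) := by
        gcongr
        calc muI (Ioc x y) ≤ volume (Ioc x y) := muI_le_volume _
          _ = ENNReal.ofReal (y - x) := Real.volume_Ioc

-- Lemma U: uniformization
lemma lemU (E : Set ℝ) (hE : MeasurableSet E) (s : ℝ≥0∞) :
    muI {x | x ∈ E ∧ muI (E ∩ Iic x) ≤ s} = min s (muI E) := by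
  set G : ℝ → ℝ≥0∞ := fun x => muI (E ∩ Iic x) with hG
  have hGmono : Monotone G := fun x y hxy => measure_mono (by gcongr)
  have hGle : ∀ x, G x ≤ muI E := fun x => measure_mono inter_subset_left
  have hfin : ∀ x, G x ≠ ⊤ := fun x => (lt_of_le_of_lt (hGle x) (measure_lt_top _ _)).ne
  by_cases hs : muI E ≤ s
  · have : {x | x ∈ E ∧ G x ≤ s} = E := by
      ext x; simp only [mem_setOf_eq, and_iff_left_iff_imp]
      exact fun _ => le_trans (hGle x) hs
    rw [this, min_eq_right hs]
  · push_neg at hs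
    -- A = {x | G x ≤ s}
    set A : Set ℝ := {x | G x ≤ s} with hA
    have hne : A.Nonempty := by
      refine ⟨-1, ?_⟩
      have : G (-1) ≤ muI (Iic (-1)) := measure_mono inter_subset_right
      have h2 : muI (Iic (-1)) = 0 :=
        muI_null (fun x hx hc => by simp only [mem_Iic] at hc; linarith [hx.1])
      simp only [hA, mem_setOf_eq]
      exact le_trans (this.trans h2.le) zero_le
    have hbdd : BddAbove A := by
      refine ⟨1, fun x hx => ?_⟩
      by_contra hx1
      push_neg at hx1
      have : muI E ≤ G x := by
        have hsub : E ⊆ (E ∩ Iic x) ∪ Ioi x := by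
          intro z hz; by_cases h : z ≤ x
          · exact Or.inl ⟨hz, h⟩
          · exact Or.inr (lt_of_not_ge h)
        calc muI E ≤ muI ((E ∩ Iic x) ∪ Ioi x) := measure_mono hsub
          _ ≤ G x + muI (Ioi x) := measure_union_le _ _
          _ = G x := by
              have : muI (Ioi x) = 0 :=
                muI_null (fun z hz hc => by simp only [mem_Ioi] at hc; linarith [hz.2])
              rw [this, add_zero]
      exact absurd (le_trans this hx) (not_le.mpr hs)
    set σ := sSup A with hσ
    have hGσ_le : G σ ≤ s := by
      refine ENNReal.le_of_forall_pos_le_add fun ε hε _ => ?_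
      obtain ⟨x, hxA, hxσ⟩ := Real.add_neg_lt_sSup hne (ε := -ε) (by simp only [neg_neg, Left.neg_neg_iff]; exact_mod_cast hε)
      have h1 : G σ ≤ G x + ENNReal.ofReal (σ - x) := muI_Lip
      have h2 : ENNReal.ofReal (σ - x) ≤ ε := by
        rw [← ENNReal.ofReal_coe_nnreal]
        apply ENNReal.ofReal_le_ofReal
        linarith
      calc G σ ≤ G x + ENNReal.ofReal (σ - x) := h1
        _ ≤ s + ε := add_le_add hxA h2
    have hGσ_ge : s ≤ G σ := by
      refine ENNReal.le_of_forall_pos_le_add fun ε hε _ => ?_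
      have hσε : σ + (ε:ℝ) ∉ A := fun h =>
        absurd (le_csSup hbdd h) (by push_neg; linarith [NNReal.coe_pos.mpr hε])
      have h1 : s < G (σ + ε) := lt_of_not_ge hσε
      have h2 : G (σ + ε) ≤ G σ + ENNReal.ofReal ((σ + ε) - σ) := muI_Lip
      have h3 : ENNReal.ofReal ((σ + ε) - σ) = (ε : ℝ≥0∞) := by
        rw [add_sub_cancel_left, ENNReal.ofReal_coe_nnreal]
      exact le_trans h1.le (h2.trans_eq (by rw [h3]))
    have hset : {x | x ∈ E ∧ G x ≤ s} = E ∩ Iic σ := by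
      ext x
      simp only [mem_setOf_eq, mem_inter_iff, mem_Iic]
      constructor
      · rintro ⟨hxE, hxs⟩; exact ⟨hxE, le_csSup hbdd hxs⟩
      · rintro ⟨hxE, hxσ⟩; exact ⟨hxE, le_trans (hGmono hxσ) hGσ_le⟩
    rw [hset, min_eq_left hs.le]
    exact le_antisymm hGσ_le hGσ_ge

-- Lemma Z: a set of "left-isolated non-atoms" above c is null
lemma lemZ (ν : Measure ℝ) (c R : ℝ) (B : Set ℝ) (hB : B ⊆ Ioc c R)
    (h0 : ∀ y ∈ B, ν (Ioc c y) = 0 ∧ ν {y} = 0) : ν B = 0 := by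
  rcases B.eq_empty_or_nonempty with h | hne
  · simp [h]
  have hbdd : BddAbove B := ⟨R, fun y hy => (hB hy).2⟩
  set σ := sSup B with hσ
  -- choose a sequence in B approaching σ
  have hseq : ∀ n : ℕ, ∃ y ∈ B, σ - 1/(n+1) < y := by
    intro n
    obtain ⟨y, hy, hy2⟩ := Real.add_neg_lt_sSup hne (ε := -(1/(n+1))) (by
      simp only [Left.neg_neg_iff]; positivity)
    exact ⟨y, hy, by linarith⟩
  choose Y hYB hYlt using hseq
  have hcover : Ioo c σ ⊆ ⋃ n, Ioc c (Y n) := by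
    intro z hz
    obtain ⟨n, hn⟩ := exists_nat_one_div_lt (show (0:ℝ) < σ - z by linarith [hz.2])
    refine mem_iUnion.mpr ⟨n, hz.1, ?_⟩
    have := hYlt n
    linarith
  have hIoo : ν (Ioo c σ) = 0 :=
    measure_mono_null hcover (measure_iUnion_null fun n => (h0 _ (hYB n)).1)
  have hBsub : B ⊆ Ioo c σ ∪ ({σ} ∩ B) := by
    intro y hy
    rcases eq_or_lt_of_le (le_csSup hbdd hy) with h | h
    · exact Or.inr ⟨h, hy⟩
    · exact Or.inl ⟨(hB hy).1, h⟩
  refine measure_mono_null hBsub (measure_union_null hIoo ?_)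
  by_cases hσB : σ ∈ B
  · exact measure_mono_null inter_subset_left (h0 _ hσB).2
  · have : ({σ} ∩ B : Set ℝ) = ∅ := by
      ext z; simp only [mem_inter_iff, mem_singleton_iff, mem_empty_iff_false, iff_false, not_and]
      rintro rfl; exact hσB
    simp [this]

section Quant
variable (ν : Measure ℝ) (C : ℝ)

/-- quantile function of ν (with support bound C) -/
noncomputable def quant : ℝ → ℝ := fun t =>
  if t ≤ 1 then sInf {y | -C ≤ y ∧ ENNReal.ofReal t ≤ ν (Iic y)} else C

variable {ν C}
variable (hprob : IsProbabilityMeasure ν) (hC : 0 ≤ C)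
  (hlo : ν (Iio (-C)) = 0) (hhi : ν (Ioi C) = 0)

lemma quant_bddBelow (t : ℝ) : BddBelow {y | -C ≤ y ∧ ENNReal.ofReal t ≤ ν (Iic y)} :=
  ⟨-C, fun y hy => hy.1⟩

include hprob hhi in
lemma nu_Iic_C : ν (Iic C) = 1 := by
  have : ν (Iic C) + ν (Ioi C) = 1 := by
    rw [← measure_union (by simp [disjoint_left]) measurableSet_Ioi]
    simp [Iic_union_Ioi, hprob.measure_univ]
  rwa [hhi, add_zero] at this

include hprob hC hhi in
lemma quant_mem_set {t : ℝ} (ht : t ≤ 1) :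
    C ∈ {y | -C ≤ y ∧ ENNReal.ofReal t ≤ ν (Iic y)} := by
  refine ⟨by linarith, ?_⟩
  rw [nu_Iic_C hprob hhi]
  exact ENNReal.ofReal_le_one.mpr ht

include hprob hC hhi in
lemma quant_le_C (t : ℝ) : quant ν C t ≤ C := by
  unfold quant
  split_ifs with h
  · exact csInf_le (quant_bddBelow t) (quant_mem_set hprob hC hhi h)
  · exact le_refl C

include hprob hC hhi in
lemma neg_C_le_quant (t : ℝ) : -C ≤ quant ν C t := by
  unfold quant
  split_ifs with h
  · exact le_csInf ⟨C, quant_mem_set hprob hC hhi h⟩ (fun y hy => hy.1)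
  · linarith

include hprob hC hhi in
lemma quant_mono : Monotone (quant ν C) := by
  intro t t' htt'
  by_cases h' : t' ≤ 1
  · have h : t ≤ 1 := htt'.trans h'
    unfold quant
    rw [if_pos h, if_pos h']
    exact csInf_le_csInf (quant_bddBelow t)
      ⟨C, quant_mem_set hprob hC hhi h'⟩
      (fun y hy => ⟨hy.1, le_trans (ENNReal.ofReal_le_ofReal htt') hy.2⟩)
  · unfold quant
    rw [if_neg h']
    split_ifs with h
    · exact csInf_le (quant_bddBelow t) (quant_mem_set hprob hC hhi h)
    · exact le_refl C

include hprob hC hhi in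
lemma quant_measurable : Measurable (quant ν C) :=
  (quant_mono hprob hC hhi).measurable

-- key fact (i): right continuity
include hprob hC hhi in
lemma ofReal_le_nu_Iic_quant {t : ℝ} (ht : t ≤ 1) [IsFiniteMeasure ν] :
    ENNReal.ofReal t ≤ ν (Iic (quant ν C t)) := by
  set c := quant ν C t with hc
  set S := {y | -C ≤ y ∧ ENNReal.ofReal t ≤ ν (Iic y)} with hS
  have hSne : S.Nonempty := ⟨C, quant_mem_set hprob hC hhi ht⟩
  have hcS : c = sInf S := by rw [hc]; unfold quant; rw [if_pos ht]
  -- Iic c = ⋂ n, Iic (c + 1/(n+1))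
  have hInter : Iic c = ⋂ n : ℕ, Iic (c + 1/(n+1)) := by
    ext z
    simp only [mem_Iic, mem_iInter]
    constructor
    · intro h n; have : (0:ℝ) < 1/(n+1) := by positivity
      linarith
    · intro h
      by_contra hz
      push_neg at hz
      obtain ⟨n, hn⟩ := exists_nat_one_div_lt (show (0:ℝ) < z - c by linarith)
      linarith [h n]
  have htendsto : ∀ n : ℕ, ENNReal.ofReal t ≤ ν (Iic (c + 1/(n+1))) := by
    intro n
    have h1 : sInf S < c + 1/(n+1) := by
      rw [← hcS]; have : (0:ℝ) < 1/(n+1) := by positivity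
      linarith
    obtain ⟨y, hyS, hy⟩ := exists_lt_of_csInf_lt hSne h1
    exact le_trans hyS.2 (measure_mono (Iic_subset_Iic.mpr hy.le))
  rw [hInter]
  have hanti : Antitone (fun n : ℕ => Iic (c + 1/(n+1))) := by
    intro m n hmn
    apply Iic_subset_Iic.mpr
    have : (1:ℝ)/(n+1) ≤ 1/(m+1) :=
      one_div_le_one_div_of_le (by positivity) (by exact_mod_cast Nat.succ_le_succ hmn)
    linarith
  have := MeasureTheory.tendsto_measure_iInter_atTop (μ := ν)
    (fun n => (measurableSet_Iic).nullMeasurableSet) hanti ⟨0, measure_ne_top ν _⟩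
  exact ge_of_tendsto this (Filter.Eventually.of_forall htendsto)

-- key fact (ii)
include hlo in
lemma nu_Iic_lt_of_lt_quant {t y : ℝ} (ht : 0 < t) (ht1 : t ≤ 1) (hy : y < quant ν C t) :
    ν (Iic y) < ENNReal.ofReal t := by
  by_cases hyC : -C ≤ y
  · by_contra h
    push_neg at h
    have : quant ν C t ≤ y := by
      unfold quant; rw [if_pos ht1]
      exact csInf_le (quant_bddBelow t) ⟨hyC, h⟩
    linarith
  · push_neg at hyC
    calc ν (Iic y) ≤ ν (Iio (-C)) := measure_mono (fun z hz => lt_of_le_of_lt hz hyC)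
      _ = 0 := hlo
      _ < ENNReal.ofReal t := by simp [ENNReal.ofReal_pos.mpr ht]

-- key fact (iii)
include hlo in
lemma nu_Iio_quant_le {t : ℝ} (ht : 0 < t) (ht1 : t ≤ 1) :
    ν (Iio (quant ν C t)) ≤ ENNReal.ofReal t := by
  set c := quant ν C t
  have hIio : Iio c = ⋃ n : ℕ, Iic (c - 1/(n+1)) := by
    ext z
    simp only [mem_Iio, mem_iUnion, mem_Iic]
    constructor
    · intro h
      obtain ⟨n, hn⟩ := exists_nat_one_div_lt (show (0:ℝ) < c - z by linarith)
      exact ⟨n, by linarith⟩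
    · rintro ⟨n, hn⟩; have : (0:ℝ) < 1/(n+1) := by positivity
      linarith
  have hmono : Monotone (fun n : ℕ => Iic (c - 1/(n+1))) := by
    intro m n hmn
    apply Iic_subset_Iic.mpr
    have : (1:ℝ)/(n+1) ≤ 1/(m+1) :=
      one_div_le_one_div_of_le (by positivity) (by exact_mod_cast Nat.succ_le_succ hmn)
    linarith
  rw [hIio, hmono.measure_iUnion]
  refine iSup_le fun n => ?_
  refine (nu_Iic_lt_of_lt_quant hlo ht ht1 ?_).le
  have : (0:ℝ) < 1/(n+1) := by positivity
  simp only [c] at *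
  linarith

include hprob hC hhi in
lemma le_quant {t z : ℝ} (ht : t ≤ 1)
    (h : ∀ y, -C ≤ y → ENNReal.ofReal t ≤ ν (Iic y) → z ≤ y) : z ≤ quant ν C t := by
  unfold quant
  rw [if_pos ht]
  exact le_csInf ⟨C, quant_mem_set hprob hC hhi ht⟩ (fun y hy => h y hy.1 hy.2)

lemma quant_le_of_mem {t y : ℝ} (ht : t ≤ 1) (h1 : -C ≤ y)
    (h2 : ENNReal.ofReal t ≤ ν (Iic y)) : quant ν C t ≤ y := by
  unfold quant
  rw [if_pos ht]
  exact csInf_le (quant_bddBelow t) ⟨h1, h2⟩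

end Quant

noncomputable def Mf (f : ℝ → ℝ) : ℝ × ℝ → ℝ≥0∞ :=
  fun p => muI (f ⁻¹' {p.2} ∩ Iic p.1)

lemma Mf_measurable {f : ℝ → ℝ} (hf : Measurable f) : Measurable (Mf f) := by
  have : Mf f = fun p : ℝ × ℝ =>
      ∫⁻ y, ({q : (ℝ × ℝ) × ℝ | f q.2 = q.1.2 ∧ q.2 ≤ q.1.1}).indicator 1 (p, y) ∂muI := by
    funext p
    simp only [Mf]
    rw [← lintegral_indicator_one ((hf (measurableSet_singleton _)).inter measurableSet_Iic)]
    refine lintegral_congr fun y => ?_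
    classical
    simp only [Set.indicator_apply]
    refine if_congr ?_ rfl rfl
    simp only [mem_inter_iff, mem_preimage, mem_singleton_iff, mem_Iic, mem_setOf_eq]
  rw [this]
  apply Measurable.lintegral_prod_right'
  apply Measurable.indicator measurable_one
  apply MeasurableSet.inter
  · exact measurableSet_eq_fun (hf.comp measurable_snd) (measurable_snd.comp measurable_fst)
  · exact measurableSet_le measurable_snd measurable_fst.fst

/-- Main rearrangement lemma -/
lemma rearrange (f : ℝ → ℝ) (hf : Measurable f) (C : ℝ) (hC : 0 ≤ C)
    (hfb : ∀ x ∈ Icc (0:ℝ) 1, |f x| ≤ C) :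
    ∃ φ : ℝ → ℝ, Measurable φ ∧ Measure.map φ muI = muI ∧
      MapsTo φ (Icc (0:ℝ) 1) (Icc (0:ℝ) 1) ∧
      ∀ᵐ x ∂muI, f x = quant (Measure.map f muI) C (φ x) := by
  set ν := Measure.map f muI with hν
  have hprob : IsProbabilityMeasure ν := Measure.isProbabilityMeasure_map hf.aemeasurable
  have hmap : ∀ s : Set ℝ, MeasurableSet s → ν s = muI (f ⁻¹' s) :=
    fun s hs => Measure.map_apply hf hs
  have hlo : ν (Iio (-C)) = 0 := by
    rw [hmap _ measurableSet_Iio]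
    exact muI_null fun x hx hc => by
      simp only [mem_preimage, mem_Iio] at hc; linarith [(abs_le.mp (hfb x hx)).1]
  have hhi : ν (Ioi C) = 0 := by
    rw [hmap _ measurableSet_Ioi]
    exact muI_null fun x hx hc => by
      simp only [mem_preimage, mem_Ioi] at hc; linarith [(abs_le.mp (hfb x hx)).2]
  -- the rearranging map
  set φ : ℝ → ℝ := fun x => (ν (Iio (f x))).toReal + (Mf f (x, f x)).toReal with hφ
  have hφm : Measurable φ := by
    apply Measurable.add
    · have hmono : Monotone (fun c : ℝ => (ν (Iio c)).toReal) := fun c c' hcc' =>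
        ENNReal.toReal_mono (measure_ne_top ν _) (measure_mono (Iio_subset_Iio hcc'))
      exact hmono.measurable.comp hf
    · exact ENNReal.measurable_toReal.comp ((Mf_measurable hf).comp (measurable_id.prodMk hf))
  -- pointwise facts
  have hMle : ∀ x : ℝ, Mf f (x, f x) ≤ ν {f x} := by
    intro x
    rw [hmap _ (measurableSet_singleton _)]
    exact measure_mono inter_subset_left
  have hIicsplit : ∀ c : ℝ, ν (Iic c) = ν (Iio c) + ν {c} := by
    intro c
    rw [← Iio_union_right, measure_union (by simp) (measurableSet_singleton _)]
  have hkey : ∀ x : ℝ, ν (Iio (f x)) + Mf f (x, f x) ≤ ν (Iic (f x)) := by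
    intro x
    rw [hIicsplit (f x)]
    exact add_le_add le_rfl (hMle x)
  have hsum : ∀ x : ℝ, φ x = (ν (Iio (f x)) + Mf f (x, f x)).toReal := by
    intro x
    rw [hφ, ENNReal.toReal_add (measure_ne_top ν _) ?_]
    exact ne_top_of_le_ne_top (measure_ne_top muI _) le_rfl
  have hφ0 : ∀ x : ℝ, 0 ≤ φ x := fun x => add_nonneg ENNReal.toReal_nonneg ENNReal.toReal_nonneg
  have hφ1 : ∀ x : ℝ, φ x ≤ 1 := by
    intro x
    rw [hsum x]
    calc (ν (Iio (f x)) + Mf f (x, f x)).toReal ≤ (ν (Iic (f x))).toReal :=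
          ENNReal.toReal_mono (measure_ne_top ν _) (hkey x)
      _ ≤ (ν univ).toReal := ENNReal.toReal_mono (measure_ne_top ν _) (measure_mono (subset_univ _))
      _ = 1 := by rw [hprob.measure_univ, ENNReal.toReal_one]
  -- atom bad set
  set Natoms : Set ℝ := ⋃ y ∈ {y : ℝ | 0 < muI {a : ℝ | f a = y}},
      {x | x ∈ f ⁻¹' {y} ∧ muI (f ⁻¹' {y} ∩ Iic x) ≤ 0} with hNdef
  have hNnull : muI Natoms = 0 := by
    refine (measure_biUnion_null_iff (Measure.countable_meas_level_set_pos hf)).mpr fun y _ => ?_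
    have := lemU (f ⁻¹' {y}) (hf (measurableSet_singleton _)) 0
    rwa [min_eq_left zero_le] at this
  have hmemN : ∀ x : ℝ, ν {f x} ≠ 0 → Mf f (x, f x) = 0 → x ∈ Natoms := by
    intro x hν0 hm0
    refine mem_biUnion ?_ ⟨rfl, le_of_eq ?_⟩
    · simp only [mem_setOf_eq]
      rw [hmap _ (measurableSet_singleton _)] at hν0
      have : f ⁻¹' {f x} = {a : ℝ | f a = f x} := by ext a; simp [mem_preimage]
      rw [← this]
      exact pos_iff_ne_zero.mpr hν0
    · exact hm0
  -- measurability of atom-free gap sets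
  have hgapm : ∀ c : ℝ, MeasurableSet {y : ℝ | y ∈ Ioc c C ∧ ν (Ioc c y) = 0 ∧ ν {y} = 0} := by
    intro c
    have h1 : Monotone (fun y : ℝ => (ν (Ioc c y)).toReal) := fun a b hab =>
      ENNReal.toReal_mono (measure_ne_top ν _) (measure_mono (Ioc_subset_Ioc_right hab))
    have h2 : Monotone (fun y : ℝ => (ν (Iic y)).toReal) := fun a b hab =>
      ENNReal.toReal_mono (measure_ne_top ν _) (measure_mono (Iic_subset_Iic.mpr hab))
    have h3 : Monotone (fun y : ℝ => (ν (Iio y)).toReal) := fun a b hab =>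
      ENNReal.toReal_mono (measure_ne_top ν _) (measure_mono (Iio_subset_Iio hab))
    have e1 : {y : ℝ | ν (Ioc c y) = 0} = (fun y : ℝ => (ν (Ioc c y)).toReal) ⁻¹' {0} := by
      ext y
      simp only [mem_setOf_eq, mem_preimage, mem_singleton_iff,
        ENNReal.toReal_eq_zero_iff, measure_ne_top ν _, or_false]
    have e2 : {y : ℝ | ν {y} = 0} =
        {y : ℝ | (ν (Iic y)).toReal - (ν (Iio y)).toReal = 0} := by
      ext y
      simp only [mem_setOf_eq, sub_eq_zero]
      rw [hIicsplit y]
      constructor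
      · intro h
        rw [h, add_zero]
      · intro h
        have hsum_ne : ν (Iio y) + ν {y} ≠ ⊤ := by
          rw [← hIicsplit y]; exact measure_ne_top ν _
        have h2' : ν (Iio y) = ν (Iio y) + ν {y} :=
          (ENNReal.toReal_eq_toReal_iff' (measure_ne_top ν _) hsum_ne).mp h.symm
        nth_rewrite 1 [← add_zero (ν (Iio y))] at h2'
        exact ((ENNReal.add_right_inj (measure_ne_top ν _)).mp h2').symm
    have : {y : ℝ | y ∈ Ioc c C ∧ ν (Ioc c y) = 0 ∧ ν {y} = 0} =
        Ioc c C ∩ ({y : ℝ | ν (Ioc c y) = 0} ∩ {y : ℝ | ν {y} = 0}) := by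
      ext y; simp only [mem_inter_iff, mem_setOf_eq]
    rw [this, e1, e2]
    refine measurableSet_Ioc.inter ((h1.measurable (measurableSet_singleton _)).inter ?_)
    exact measurableSet_eq_fun (h2.measurable.sub h3.measurable) measurable_const
  have hcomplnull : muI (Icc (0:ℝ) 1)ᶜ = 0 := muI_null fun x hx hc => hc hx
  -- measure preservation
  have hmapeq : Measure.map φ muI = muI := by
    have hpm : IsProbabilityMeasure (Measure.map φ muI) :=
      Measure.isProbabilityMeasure_map hφm.aemeasurable
    refine Measure.ext_of_Iic (Measure.map φ muI) muI fun t => ?_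
    rw [Measure.map_apply hφm measurableSet_Iic]
    rcases lt_or_ge t 0 with ht | ht
    · rw [muI_null (s := φ ⁻¹' Iic t) fun x _ hc => by
        simp only [mem_preimage, mem_Iic] at hc; linarith [hφ0 x],
        muI_null (s := Iic t) fun x hx hc => by
        simp only [mem_Iic] at hc; linarith [hx.1]]
    rcases le_or_gt 1 t with ht1 | ht1
    · rw [muI_full (s := φ ⁻¹' Iic t) fun x _ => by
        simp only [mem_preimage, mem_Iic]; linarith [hφ1 x],
        muI_full (s := Iic t) fun x hx => by
        simp only [mem_Iic]; linarith [hx.2]]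
    have hRHS : muI (Iic t) = ENNReal.ofReal t := by
      rw [muI_apply]
      have : Iic t ∩ Icc (0:ℝ) 1 = Icc 0 t := by
        ext z
        simp only [mem_inter_iff, mem_Iic, mem_Icc]
        constructor
        · rintro ⟨h1, h2, h3⟩; exact ⟨h2, h1⟩
        · rintro ⟨h1, h2⟩; exact ⟨h2, h1, by linarith⟩
      rw [this, Real.volume_Icc, sub_zero]
    rw [hRHS]
    rcases ht.eq_or_lt with heq | hpos
    · -- t = 0 case
      rw [← heq, ENNReal.ofReal_zero]
      set B2 := {y : ℝ | y ∈ Ioc (-C-1) C ∧ ν (Ioc (-C-1) y) = 0 ∧ ν {y} = 0} with hB2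
      have hB2null : ν B2 = 0 := lemZ ν (-C-1) C B2 (fun y hy => hy.1) (fun y hy => hy.2)
      have hsub : φ ⁻¹' Iic 0 ⊆ Natoms ∪ f ⁻¹' B2 ∪ (Icc (0:ℝ) 1)ᶜ := by
        intro x hx
        by_cases hxI : x ∈ Icc (0:ℝ) 1
        swap
        · exact Or.inr hxI
        left
        have hφx : φ x = 0 := le_antisymm hx (hφ0 x)
        have hanm : ν (Iio (f x)) + Mf f (x, f x) ≠ ⊤ :=
          (lt_of_le_of_lt (hkey x) (measure_lt_top ν _)).ne
        have hsum0 : ν (Iio (f x)) + Mf f (x, f x) = 0 := by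
          rw [hsum x] at hφx
          rcases (ENNReal.toReal_eq_zero_iff _).mp hφx with h | h
          · exact h
          · exact absurd h hanm
        have ha0 : ν (Iio (f x)) = 0 := (add_eq_zero.mp hsum0).1
        have hm0 : Mf f (x, f x) = 0 := (add_eq_zero.mp hsum0).2
        by_cases hatom : ν {f x} = 0
        · right
          refine mem_preimage.mpr ⟨⟨?_, (abs_le.mp (hfb x hxI)).2⟩, ?_, hatom⟩
          · linarith [(abs_le.mp (hfb x hxI)).1]
          · refine measure_mono_null Ioc_subset_Iic_self ?_
            rw [hIicsplit, ha0, hatom, add_zero]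
        · left; exact hmemN x hatom hm0
      refine measure_mono_null hsub ?_
      refine measure_union_null (measure_union_null hNnull ?_) hcomplnull
      rw [← hmap _ (hgapm (-C-1))]
      exact hB2null
    · -- 0 < t < 1 case
      set c := quant ν C t with hc
      have hi : ENNReal.ofReal t ≤ ν (Iic c) := ofReal_le_nu_Iic_quant hprob hC hhi ht1.le
      have hii : ∀ y : ℝ, y < c → ν (Iic y) < ENNReal.ofReal t := fun y hy =>
        nu_Iic_lt_of_lt_quant hlo hpos ht1.le hy
      have hiii : ν (Iio c) ≤ ENNReal.ofReal t := nu_Iio_quant_le hlo hpos ht1.le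
      set S := φ ⁻¹' Iic t with hS
      have hSm : MeasurableSet S := hφm measurableSet_Iic
      set A1 := f ⁻¹' Iio c with hA1
      set A2 := f ⁻¹' {c} with hA2
      set A3 := f ⁻¹' Ioi c with hA3
      have hxS_iff : ∀ x : ℝ, x ∈ S ↔ φ x ≤ t := fun x => Iff.rfl
      have hdecomp : muI S = muI (S ∩ A1) + muI (S ∩ A2) + muI (S ∩ A3) := by
        have d1 : muI (S ∩ A1) + muI (S \ A1) = muI S :=
          measure_inter_add_diff S (hf measurableSet_Iio)
        have d2 : muI ((S \ A1) ∩ A2) + muI ((S \ A1) \ A2) = muI (S \ A1) :=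
          measure_inter_add_diff _ (hf (measurableSet_singleton c))
        have e1 : (S \ A1) ∩ A2 = S ∩ A2 := by
          ext x
          simp only [mem_inter_iff, mem_diff, hA1, hA2, mem_preimage, mem_Iio,
            mem_singleton_iff]
          constructor
          · rintro ⟨⟨h1, _⟩, h3⟩; exact ⟨h1, h3⟩
          · rintro ⟨h1, h3⟩; exact ⟨⟨h1, by rw [h3]; exact lt_irrefl c⟩, h3⟩
        have e2 : (S \ A1) \ A2 = S ∩ A3 := by
          ext x
          simp only [mem_inter_iff, mem_diff, hA1, hA2, hA3, mem_preimage, mem_Iio,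
            mem_singleton_iff, mem_Ioi]
          constructor
          · rintro ⟨⟨h1, h2⟩, h3⟩
            exact ⟨h1, lt_of_le_of_ne (not_lt.mp h2) (Ne.symm h3)⟩
          · rintro ⟨h1, h2⟩
            exact ⟨⟨h1, not_lt.mpr h2.le⟩, fun hceq => absurd hceq (ne_of_gt h2)⟩
        rw [← d1, ← d2, e1, e2, add_assoc]
      have hP1 : muI (S ∩ A1) = ν (Iio c) := by
        rw [hmap _ measurableSet_Iio]
        have hnull : muI (A1 \ S) = 0 := by
          refine muI_null fun x hxI hx => hx.2 ?_
          show φ x ≤ t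
          rw [hsum x]
          refine ENNReal.toReal_le_of_le_ofReal hpos.le (le_of_lt ?_)
          exact lt_of_le_of_lt (hkey x) (hii _ hx.1)
        have hd := measure_inter_add_diff (μ := muI) A1 hSm
        rw [hnull, add_zero] at hd
        rw [← hd, inter_comm]
      have hP2 : muI (S ∩ A2) = ENNReal.ofReal t - ν (Iio c) := by
        have htoRa : (ν (Iio c)).toReal ≤ t := by
          have h' := ENNReal.toReal_mono ENNReal.ofReal_ne_top hiii
          rwa [ENNReal.toReal_ofReal hpos.le] at h'
        have hofa : ENNReal.ofReal ((ν (Iio c)).toReal) = ν (Iio c) :=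
          ENNReal.ofReal_toReal (measure_ne_top ν _)
        have hset : S ∩ A2 =
            {x | x ∈ f ⁻¹' {c} ∧ muI (f ⁻¹' {c} ∩ Iic x) ≤ ENNReal.ofReal t - ν (Iio c)} := by
          ext x
          simp only [mem_inter_iff, mem_setOf_eq, hA2]
          constructor
          · rintro ⟨hxS, hxc⟩
            refine ⟨hxc, ?_⟩
            have hfxc : f x = c := hxc
            have hφxt : φ x ≤ t := hxS
            rw [hφ] at hφxt
            simp only [hfxc] at hφxt
            have hmle : (Mf f (x, c)).toReal ≤ t - (ν (Iio c)).toReal := by linarith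
            have hMfne : Mf f (x, c) ≠ ⊤ := measure_ne_top muI _
            have h5 : Mf f (x, c) ≤ ENNReal.ofReal (t - (ν (Iio c)).toReal) :=
              (ENNReal.le_ofReal_iff_toReal_le hMfne (by linarith)).mpr hmle
            calc muI (f ⁻¹' {c} ∩ Iic x) = Mf f (x, c) := rfl
              _ ≤ ENNReal.ofReal (t - (ν (Iio c)).toReal) := h5
              _ = ENNReal.ofReal t - ν (Iio c) := by
                  rw [ENNReal.ofReal_sub _ ENNReal.toReal_nonneg, hofa]
          · rintro ⟨hxc, hle⟩
            have hfxc : f x = c := hxc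
            refine ⟨?_, hxc⟩
            have h1 : Mf f (x, c) ≤ ENNReal.ofReal (t - (ν (Iio c)).toReal) := by
              calc Mf f (x, c) = muI (f ⁻¹' {c} ∩ Iic x) := rfl
                _ ≤ ENNReal.ofReal t - ν (Iio c) := hle
                _ = ENNReal.ofReal (t - (ν (Iio c)).toReal) := by
                    rw [ENNReal.ofReal_sub _ ENNReal.toReal_nonneg, hofa]
            have hMfne : Mf f (x, c) ≠ ⊤ := measure_ne_top muI _
            have h2 : (Mf f (x, c)).toReal ≤ t - (ν (Iio c)).toReal :=
              (ENNReal.le_ofReal_iff_toReal_le hMfne (by linarith)).mp h1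
            show φ x ≤ t
            rw [hφ]
            simp only
            rw [hfxc]
            linarith
        rw [hset, lemU _ (hf (measurableSet_singleton _)) _]
        rw [← hmap _ (measurableSet_singleton _)]
        apply min_eq_left
        rw [tsub_le_iff_left, ← hIicsplit]
        exact hi
      have hP3 : muI (S ∩ A3) = 0 := by
        set B0 := {y : ℝ | y ∈ Ioc c C ∧ ν (Ioc c y) = 0 ∧ ν {y} = 0} with hB0
        have hB0null : ν B0 = 0 := lemZ ν c C B0 (fun y hy => hy.1) (fun y hy => hy.2)
        have hsub : S ∩ A3 ⊆ Natoms ∪ f ⁻¹' B0 ∪ (Icc (0:ℝ) 1)ᶜ := by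
          rintro x ⟨hxS, hxA3⟩
          by_cases hxI : x ∈ Icc (0:ℝ) 1
          swap
          · exact Or.inr hxI
          left
          have hfx : c < f x := hxA3
          have hφxt : φ x ≤ t := hxS
          have hage : ENNReal.ofReal t ≤ ν (Iio (f x)) :=
            le_trans hi (measure_mono (fun z hz => lt_of_le_of_lt hz hfx))
          have hale : ν (Iio (f x)) ≤ ENNReal.ofReal t := by
            rw [ENNReal.le_ofReal_iff_toReal_le (measure_ne_top ν _) hpos.le]
            calc (ν (Iio (f x))).toReal ≤ φ x := le_add_of_nonneg_right ENNReal.toReal_nonneg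
              _ ≤ t := hφxt
          have haeq : ν (Iio (f x)) = ENNReal.ofReal t := le_antisymm hale hage
          have hm0 : Mf f (x, f x) = 0 := by
            have h1 : (ν (Iio (f x))).toReal = t := by
              rw [haeq, ENNReal.toReal_ofReal hpos.le]
            rw [hφ] at hφxt
            have h3 : (Mf f (x, f x)).toReal = 0 := le_antisymm (by
              simp only at hφxt; linarith) ENNReal.toReal_nonneg
            rcases (ENNReal.toReal_eq_zero_iff _).mp h3 with h | h
            · exact h
            · exact absurd h (measure_ne_top muI _)
          by_cases hatom : ν {f x} = 0
          · right
            have hIooz : ν (Ioo c (f x)) = 0 := by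
              have hdiff : Iio (f x) \ Iic c = Ioo c (f x) := by
                ext z
                simp only [mem_diff, mem_Iio, mem_Iic, mem_Ioo, not_le]
                exact ⟨fun ⟨h1, h2⟩ => ⟨h2, h1⟩, fun ⟨h1, h2⟩ => ⟨h2, h1⟩⟩
              rw [← hdiff, measure_diff (show Iic c ⊆ Iio (f x) from fun z hz =>
                lt_of_le_of_lt hz hfx) measurableSet_Iic.nullMeasurableSet
                (measure_ne_top ν _), haeq]
              exact tsub_eq_zero_iff_le.mpr hi
            have hIocz : ν (Ioc c (f x)) = 0 := by
              rw [← Ioo_union_right hfx]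
              exact measure_union_null hIooz hatom
            exact mem_preimage.mpr ⟨⟨hfx, (abs_le.mp (hfb x hxI)).2⟩, hIocz, hatom⟩
          · left; exact hmemN x hatom hm0
        refine measure_mono_null hsub ?_
        refine measure_union_null (measure_union_null hNnull ?_) hcomplnull
        rw [← hmap _ (hgapm c)]
        exact hB0null
      rw [hdecomp, hP1, hP2, hP3, add_zero]
      exact add_tsub_cancel_of_le hiii
  refine ⟨φ, hφm, hmapeq, fun x hx => ⟨hφ0 x, hφ1 x⟩, ?_⟩
  -- the a.e. identity f = quant ∘ φ
  set B3 := ⋃ q : ℚ, {y : ℝ | y ∈ Ioc (q:ℝ) C ∧ ν (Ioc (q:ℝ) y) = 0 ∧ ν {y} = 0} with hB3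
  have hB3m : MeasurableSet B3 := MeasurableSet.iUnion fun q => hgapm q
  have hB3null : ν B3 = 0 :=
    measure_iUnion_null fun q => lemZ ν q C _ (fun y hy => hy.1) (fun y hy => hy.2)
  have ae1 : ∀ᵐ x ∂muI, x ∈ Icc (0:ℝ) 1 := ae_restrict_mem measurableSet_Icc
  have ae2 : ∀ᵐ x ∂muI, x ∉ Natoms := measure_eq_zero_iff_ae_notMem.mp hNnull
  have ae3 : ∀ᵐ x ∂muI, x ∉ f ⁻¹' B3 :=
    measure_eq_zero_iff_ae_notMem.mp (by rw [← hmap _ hB3m]; exact hB3null)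
  filter_upwards [ae1, ae2, ae3] with x hxI hxN hxB
  have ht0 : 0 ≤ φ x := hφ0 x
  have ht1 : φ x ≤ 1 := hφ1 x
  have hfxlo : -C ≤ f x := (abs_le.mp (hfb x hxI)).1
  have hfxhi : f x ≤ C := (abs_le.mp (hfb x hxI)).2
  have hanm : ν (Iio (f x)) + Mf f (x, f x) ≠ ⊤ :=
    (lt_of_le_of_lt (hkey x) (measure_lt_top ν _)).ne
  have hofReal : ENNReal.ofReal (φ x) = ν (Iio (f x)) + Mf f (x, f x) := by
    rw [hsum x, ENNReal.ofReal_toReal hanm]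
  apply le_antisymm
  · -- f x ≤ quant ν C (φ x)
    refine le_quant hprob hC hhi ht1 fun y hylo hyIic => ?_
    by_contra hyx
    push_neg at hyx
    have h1 : ν (Iic y) ≤ ν (Iio (f x)) := measure_mono fun z hz => lt_of_le_of_lt hz hyx
    have h3 : ν (Iio (f x)) + Mf f (x, f x) ≤ ν (Iio (f x)) + 0 := by
      rw [add_zero]
      calc ν (Iio (f x)) + Mf f (x, f x) = ENNReal.ofReal (φ x) := hofReal.symm
        _ ≤ ν (Iic y) := hyIic
        _ ≤ ν (Iio (f x)) := h1
    have hm0 : Mf f (x, f x) = 0 :=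
      le_antisymm ((ENNReal.add_le_add_iff_left (measure_ne_top ν _)).mp h3) zero_le
    have haφ : ν (Iio (f x)) = ENNReal.ofReal (φ x) := by rw [hofReal, hm0, add_zero]
    have hIicEq : ν (Iic y) = ν (Iio (f x)) := le_antisymm h1 (haφ ▸ hyIic)
    by_cases hatom : ν {f x} = 0
    · obtain ⟨q, hq1, hq2⟩ := exists_rat_btwn hyx
      apply hxB
      refine mem_preimage.mpr (mem_iUnion.mpr ⟨q, ⟨hq2, hfxhi⟩, ?_, hatom⟩)
      have hIoo : ν (Ioo y (f x)) = 0 := by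
        have hdiff : Iio (f x) \ Iic y = Ioo y (f x) := by
          ext z
          simp only [mem_diff, mem_Iio, mem_Iic, mem_Ioo, not_le]
          exact ⟨fun ⟨a, b⟩ => ⟨b, a⟩, fun ⟨a, b⟩ => ⟨b, a⟩⟩
        rw [← hdiff, measure_diff (show Iic y ⊆ Iio (f x) from fun z hz =>
          lt_of_le_of_lt hz hyx) measurableSet_Iic.nullMeasurableSet (measure_ne_top ν _),
          hIicEq, tsub_self]
      refine measure_mono_null (fun z hz => ?_) (measure_union_null hIoo hatom)
      rcases hz.2.eq_or_lt with hze | hzl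
      · exact Or.inr hze
      · exact Or.inl ⟨lt_trans hq1 (by exact_mod_cast hz.1), hzl⟩
    · exact hxN (hmemN x hatom hm0)
  · -- quant ν C (φ x) ≤ f x
    refine quant_le_of_mem ht1 hfxlo ?_
    rw [hofReal]
    exact hkey x

lemma dist_eq (f g : ℝ → ℝ) (hf : Measurable f) (hg : Measurable g) (C : ℝ)
    (hfb : ∀ x ∈ Icc (0:ℝ) 1, |f x| ≤ C) (hgb : ∀ x ∈ Icc (0:ℝ) 1, |g x| ≤ C)
    (hmom : ∀ k : ℕ, ∫ x, f x ^ k ∂muI = ∫ x, g x ^ k ∂muI) :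
    Measure.map f muI = Measure.map g muI := by
  set νf := Measure.map f muI with hνf
  set νg := Measure.map g muI with hνg
  have hpf : IsProbabilityMeasure νf := Measure.isProbabilityMeasure_map hf.aemeasurable
  have hpg : IsProbabilityMeasure νg := Measure.isProbabilityMeasure_map hg.aemeasurable
  -- a.e. support in Icc (-C) C
  have haes : ∀ (h : ℝ → ℝ), Measurable h → (∀ x ∈ Icc (0:ℝ) 1, |h x| ≤ C) →
      ∀ᵐ y ∂(Measure.map h muI), y ∈ Icc (-C) C := by
    intro h hm hb
    have : Measure.map h muI (Icc (-C) C)ᶜ = 0 := by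
      rw [Measure.map_apply hm measurableSet_Icc.compl]
      refine muI_null fun x hx hc => hc ?_
      exact mem_preimage.mpr (abs_le.mp (hb x hx))
    filter_upwards [measure_eq_zero_iff_ae_notMem.mp this] with y hy
    exact not_not.mp hy
  have haef : ∀ᵐ y ∂νf, y ∈ Icc (-C) C := haes f hf hfb
  have haeg : ∀ᵐ y ∂νg, y ∈ Icc (-C) C := haes g hg hgb
  -- integrability of continuous functions
  have hint : ∀ (ν : Measure ℝ), IsProbabilityMeasure ν → (∀ᵐ y ∂ν, y ∈ Icc (-C) C) →
      ∀ (u : ℝ → ℝ), Continuous u → Integrable u ν := by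
    intro ν hp hae u hu
    obtain ⟨B, hB⟩ := isCompact_Icc.exists_bound_of_continuousOn
      (hu.continuousOn (s := Icc (-C) C))
    exact (integrable_const B).mono' hu.aestronglyMeasurable
      (by filter_upwards [hae] with y hy; exact hB y hy)
  -- moments transfer
  have hmomf : ∀ k : ℕ, ∫ y, y ^ k ∂νf = ∫ y, y ^ k ∂νg := by
    intro k
    rw [hνf, hνg, integral_map hf.aemeasurable (continuous_pow k).aestronglyMeasurable,
      integral_map hg.aemeasurable (continuous_pow k).aestronglyMeasurable]
    exact hmom k
  -- polynomials
  have hpoly : ∀ p : Polynomial ℝ, ∫ y, p.eval y ∂νf = ∫ y, p.eval y ∂νg := by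
    intro p
    have hev : ∀ y : ℝ, p.eval y =
        ∑ i ∈ Finset.range (p.natDegree + 1), p.coeff i * y ^ i := fun y =>
      Polynomial.eval_eq_sum_range y
    simp only [hev]
    rw [integral_finset_sum _ (fun i _ => hint νf hpf haef (fun y => p.coeff i * y ^ i)
        (continuous_const.mul (continuous_pow i))),
      integral_finset_sum _ (fun i _ => hint νg hpg haeg (fun y => p.coeff i * y ^ i)
        (continuous_const.mul (continuous_pow i)))]
    refine Finset.sum_congr rfl fun i _ => ?_
    rw [integral_const_mul, integral_const_mul, hmomf i]
  -- continuous functions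
  have hcont : ∀ u : ℝ → ℝ, Continuous u → ∫ y, u y ∂νf = ∫ y, u y ∂νg := by
    intro u hu
    have key : ∀ ε : ℝ, 0 < ε → |∫ y, u y ∂νf - ∫ y, u y ∂νg| ≤ 2 * ε := by
      intro ε hε
      -- Weierstrass approximation
      have hdense := polynomialFunctions_closure_eq_top (-C) C
      set uCM : C(Icc (-C) C, ℝ) := ⟨fun y => u y, hu.comp continuous_subtype_val⟩ with huCM
      have hmem : uCM ∈ (polynomialFunctions (Icc (-C) C)).topologicalClosure := by
        rw [hdense]; trivial
      have hmem' : uCM ∈ closure (polynomialFunctions (Icc (-C) C) : Set C(Icc (-C) C, ℝ)) := by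
        rw [← Subalgebra.topologicalClosure_coe]; exact hmem
      obtain ⟨b, hbmem, hbdist⟩ := Metric.mem_closure_iff.mp hmem' ε hε
      rw [polynomialFunctions_coe] at hbmem
      obtain ⟨q, hq⟩ := hbmem
      have happrox : ∀ y ∈ Icc (-C) C, |u y - q.eval y| ≤ ε := by
        intro y hy
        have e1 : uCM ⟨y, hy⟩ = u y := rfl
        have e2 : b ⟨y, hy⟩ = q.eval y := by rw [← hq]; rfl
        calc |u y - q.eval y| = dist (u y) (q.eval y) := (Real.dist_eq _ _).symm
          _ = dist (uCM ⟨y, hy⟩) (b ⟨y, hy⟩) := by rw [e1, e2]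
          _ ≤ dist uCM b := ContinuousMap.dist_apply_le_dist _
          _ ≤ ε := hbdist.le
      have hbound : ∀ (ν : Measure ℝ), IsProbabilityMeasure ν → (∀ᵐ y ∂ν, y ∈ Icc (-C) C) →
          |∫ y, u y ∂ν - ∫ y, q.eval y ∂ν| ≤ ε := by
        intro ν hp hae
        rw [← integral_sub (hint ν hp hae u hu) (hint ν hp hae _ q.continuous)]
        have hn := norm_integral_le_of_norm_le_const (μ := ν)
          (f := fun y => u y - q.eval y) (C := ε)
          (by filter_upwards [hae] with y hy; rw [Real.norm_eq_abs]; exact happrox y hy)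
        rwa [Real.norm_eq_abs, probReal_univ, mul_one] at hn
      have h1 := hbound νf hpf haef
      have h2 := hbound νg hpg haeg
      have h3 := hpoly q
      rw [abs_le] at h1 h2 ⊢
      constructor <;> linarith [h1.1, h1.2, h2.1, h2.2]
    by_contra hne
    have hpos : 0 < |∫ y, u y ∂νf - ∫ y, u y ∂νg| := abs_pos.mpr (sub_ne_zero.mpr hne)
    have := key (|∫ y, u y ∂νf - ∫ y, u y ∂νg| / 4) (by linarith)
    linarith
  -- CDF equality via continuous approximation of indicators
  refine Measure.ext_of_Iic νf νg fun t => ?_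
  set χ : ℕ → ℝ → ℝ := fun n y => max 0 (min 1 (1 - n * (y - t))) with hχ
  have hχcont : ∀ n, Continuous (χ n) := fun n =>
    continuous_const.max (continuous_const.min
      (continuous_const.sub (continuous_const.mul (continuous_id.sub continuous_const))))
  have hχbd : ∀ n y, ‖χ n y‖ ≤ 1 := by
    intro n y
    rw [Real.norm_eq_abs, abs_le]
    exact ⟨le_trans (by norm_num) (le_max_left _ _),
      max_le (by norm_num) (min_le_left _ _)⟩
  have hχtend : ∀ y : ℝ,
      Tendsto (fun n => χ n y) atTop (𝓝 ((Iic t).indicator (fun _ => (1:ℝ)) y)) := by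
    intro y
    by_cases hy : y ≤ t
    · have hone : ∀ n : ℕ, χ n y = 1 := by
        intro n
        have h1 : (1:ℝ) ≤ 1 - n * (y - t) := by nlinarith [Nat.cast_nonneg (α := ℝ) n]
        rw [hχ]
        simp only
        rw [min_eq_left h1, max_eq_right (by norm_num : (0:ℝ) ≤ 1)]
      rw [indicator_of_mem (mem_Iic.mpr hy)]
      simp only [hone]
      exact tendsto_const_nhds
    · push_neg at hy
      rw [indicator_of_notMem (by simp only [mem_Iic, not_le]; exact hy)]
      have hev : ∀ᶠ n : ℕ in atTop, χ n y = 0 := by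
        filter_upwards [eventually_ge_atTop ⌈1/(y - t)⌉₊] with n hn
        have h3 : 0 < y - t := by linarith
        have h2 : 1/(y-t) ≤ (n:ℝ) := le_trans (Nat.le_ceil _) (by exact_mod_cast hn)
        rw [div_le_iff₀ h3] at h2
        have h1 : 1 - n * (y - t) ≤ 0 := by nlinarith
        rw [hχ]
        simp only
        rw [max_eq_left (le_trans (min_le_right _ _) h1)]
      exact Tendsto.congr' (hev.mono fun n h => h.symm) tendsto_const_nhds
  have hlim : ∀ (ν : Measure ℝ), IsProbabilityMeasure ν →
      Tendsto (fun n => ∫ y, χ n y ∂ν) atTop (𝓝 ((ν (Iic t)).toReal)) := by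
    intro ν hp
    have hdc := tendsto_integral_of_dominated_convergence (μ := ν) (bound := fun _ => (1:ℝ))
      (F := fun n y => χ n y) (f := (Iic t).indicator fun _ => (1:ℝ))
      (fun n => (hχcont n).aestronglyMeasurable)
      (integrable_const 1)
      (fun n => Filter.Eventually.of_forall (hχbd n))
      (Filter.Eventually.of_forall hχtend)
    rwa [integral_indicator_const _ measurableSet_Iic, smul_eq_mul, mul_one] at hdc
  have heqn : ∀ n, ∫ y, χ n y ∂νf = ∫ y, χ n y ∂νg := fun n => hcont (χ n) (hχcont n)
  have h2 : Tendsto (fun n => ∫ y, χ n y ∂νf) atTop (𝓝 ((νg (Iic t)).toReal)) := by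
    simp only [heqn]
    exact hlim νg hpg
  have h3 : (νf (Iic t)).toReal = (νg (Iic t)).toReal :=
    tendsto_nhds_unique (hlim νf hpf) h2
  exact (ENNReal.toReal_eq_toReal_iff' (measure_ne_top _ _) (measure_ne_top _ _)).mp h3

theorem stmt0 (f g : ℝ → ℝ) (hf : Measurable f) (hg : Measurable g)
    (hfb : ∃ C, ∀ x ∈ Icc (0:ℝ) 1, |f x| ≤ C)
    (hgb : ∃ C, ∀ x ∈ Icc (0:ℝ) 1, |g x| ≤ C)
    (hmom : ∀ k : ℕ, ∫ x, f x ^ k ∂muI = ∫ x, g x ^ k ∂muI) :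
    ∃ (h φ ψ : ℝ → ℝ), Measurable h ∧ (∃ C, ∀ x ∈ Icc (0:ℝ) 1, |h x| ≤ C) ∧
      MeasurePreserving φ muI muI ∧ MeasurePreserving ψ muI muI ∧
      MapsTo φ (Icc (0:ℝ) 1) (Icc (0:ℝ) 1) ∧ MapsTo ψ (Icc (0:ℝ) 1) (Icc (0:ℝ) 1) ∧
      (∀ᵐ x ∂muI, f x = h (φ x)) ∧ (∀ᵐ x ∂muI, g x = h (ψ x)) := by
  obtain ⟨Cf, hCf⟩ := hfb
  obtain ⟨Cg, hCg⟩ := hgb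
  set C := max Cf Cg with hCdef
  have hC : 0 ≤ C := le_trans (le_trans (abs_nonneg (f 0))
    (hCf 0 ⟨le_refl 0, zero_le_one⟩)) (le_max_left _ _)
  have hfb' : ∀ x ∈ Icc (0:ℝ) 1, |f x| ≤ C := fun x hx =>
    le_trans (hCf x hx) (le_max_left _ _)
  have hgb' : ∀ x ∈ Icc (0:ℝ) 1, |g x| ≤ C := fun x hx =>
    le_trans (hCg x hx) (le_max_right _ _)
  have hdist : Measure.map f muI = Measure.map g muI :=
    dist_eq f g hf hg C hfb' hgb' hmom
  obtain ⟨φ, hφm, hφeq, hφmaps, hφae⟩ := rearrange f hf C hC hfb'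
  obtain ⟨ψ, hψm, hψeq, hψmaps, hψae⟩ := rearrange g hg C hC hgb'
  set ν := Measure.map f muI with hν
  have hprob : IsProbabilityMeasure ν := Measure.isProbabilityMeasure_map hf.aemeasurable
  have hhi : ν (Ioi C) = 0 := by
    rw [hν, Measure.map_apply hf measurableSet_Ioi]
    exact muI_null fun x hx hc => by
      simp only [mem_preimage, mem_Ioi] at hc
      linarith [(abs_le.mp (hfb' x hx)).2]
  have hψae' : ∀ᵐ x ∂muI, g x = quant ν C (ψ x) := by
    rw [hdist]
    exact hψae
  exact ⟨quant ν C, φ, ψ, quant_measurable hprob hC hhi,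
    ⟨C, fun x _ => abs_le.mpr ⟨neg_C_le_quant hprob hC hhi x, quant_le_C hprob hC hhi x⟩⟩,
    ⟨hφm, hφeq⟩, ⟨hψm, hψeq⟩, hφmaps, hψmaps, hφae, hψae'⟩
end

section
/- Let α : ℝ[x₁,...,xₙ] → ℝ be a linear functional that is normalized (α(1) = 1), positive semidefinite (α(f²) ≥ 0 for all polynomials f), and satisfies |α(xᵢʳ)| ≤ dʳ for all 1 ≤ i ≤ n and all r ≥ 0, where d > 0. Then |α(x₁^{r₁} x₂^{r₂} ⋯ xₙ^{rₙ})| ≤ d^{r₁+r₂+⋯+rₙ} for all exponent vectors (r₁,...,rₙ). -/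
open MvPolynomial Finset

lemma cs_aux {n : ℕ} (α : MvPolynomial (Fin n) ℝ →ₗ[ℝ] ℝ)
    (hpsd : ∀ p : MvPolynomial (Fin n) ℝ, 0 ≤ α (p ^ 2))
    (f g : MvPolynomial (Fin n) ℝ) :
    (α (f * g)) ^ 2 ≤ α (f ^ 2) * α (g ^ 2) := by
  have key : ∀ x : ℝ, 0 ≤ α (g ^ 2) * (x * x) + (2 * α (f * g)) * x + α (f ^ 2) := by
    intro x
    have h := hpsd (C x * g + f)
    have e : (C x * g + f) ^ 2
        = C (x ^ 2) * g ^ 2 + C x * (2 * (f * g)) + f ^ 2 := by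
      rw [map_pow]; ring
    rw [e] at h
    have hs : ∀ (y : ℝ) (p : MvPolynomial (Fin n) ℝ), α (C y * p) = y * α p := by
      intro y p
      rw [← smul_eq_C_mul, map_smul, smul_eq_mul]
    simp only [map_add, hs, map_mul] at h
    have h2 : α (2 * (f * g)) = 2 * α (f * g) := by
      rw [two_mul, map_add]; ring
    rw [h2, pow_two] at h
    linarith
  have hd := discrim_le_zero (a := α (g ^ 2)) (b := 2 * α (f * g)) (c := α (f ^ 2)) key
  simp only [discrim] at hd
  nlinarith [hd]

theorem stmt3 (n : ℕ) (d : ℝ) (hd : 0 < d)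
    (α : MvPolynomial (Fin n) ℝ →ₗ[ℝ] ℝ)
    (hnorm : α 1 = 1)
    (hpsd : ∀ p : MvPolynomial (Fin n) ℝ, 0 ≤ α (p ^ 2))
    (hbd : ∀ (i : Fin n) (r : ℕ), |α (MvPolynomial.X i ^ r)| ≤ d ^ r)
    (r : Fin n → ℕ) :
    |α (∏ i, MvPolynomial.X i ^ r i)| ≤ d ^ (∑ i, r i) := by
  have main : ∀ (k : ℕ) (r : Fin n → ℕ),
      (Finset.univ.filter fun i => r i ≠ 0).card ≤ k →
      |α (∏ i, MvPolynomial.X i ^ r i)| ≤ d ^ (∑ i, r i) := by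
    intro k
    induction k with
    | zero =>
      intro r hr
      have hz : ∀ i, r i = 0 := by
        intro i
        by_contra h
        have : i ∈ Finset.univ.filter fun i => r i ≠ 0 := by simp [h]
        have := Finset.card_pos.mpr ⟨i, this⟩
        omega
      simp [hz, hnorm]
    | succ k ih =>
      intro r hr
      by_cases hemp : (Finset.univ.filter fun i => r i ≠ 0) = ∅
      · have hz : ∀ i, r i = 0 := by
          intro i
          by_contra h
          have : i ∈ Finset.univ.filter fun i => r i ≠ 0 := by simp [h]
          simp [hemp] at this
        simp [hz, hnorm]
      · obtain ⟨j, hj⟩ := Finset.nonempty_iff_ne_empty.mpr hemp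
        have hjr : r j ≠ 0 := by simpa using hj
        set r' : Fin n → ℕ := fun i => if i = j then 0 else 2 * r i with hr'
        have hcard : (Finset.univ.filter fun i => r' i ≠ 0).card ≤ k := by
          have hsub : (Finset.univ.filter fun i => r' i ≠ 0) ⊆
              (Finset.univ.filter fun i => r i ≠ 0).erase j := by
            intro i hi
            simp only [Finset.mem_filter, Finset.mem_univ, true_and, hr'] at hi
            rcases eq_or_ne i j with h | h
            · simp [h] at hi
            · simp [Finset.mem_erase, h]
              intro hri; exact hi (by simp [h, hri])
          calc (Finset.univ.filter fun i => r' i ≠ 0).card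
              ≤ ((Finset.univ.filter fun i => r i ≠ 0).erase j).card :=
                Finset.card_le_card hsub
            _ = (Finset.univ.filter fun i => r i ≠ 0).card - 1 :=
                Finset.card_erase_of_mem hj
            _ ≤ k := by omega
        -- split off j
        set g : MvPolynomial (Fin n) ℝ := ∏ i ∈ Finset.univ.erase j, X i ^ r i with hg
        have hsplit : (∏ i, (X i : MvPolynomial (Fin n) ℝ) ^ r i)
            = X j ^ r j * g := by
          rw [hg]
          exact (Finset.mul_prod_erase Finset.univ
            (fun i => (X i : MvPolynomial (Fin n) ℝ) ^ r i) (Finset.mem_univ j)).symm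
        have hg2 : g ^ 2 = ∏ i, (X i : MvPolynomial (Fin n) ℝ) ^ r' i := by
          rw [hg, ← Finset.prod_pow]
          rw [← Finset.mul_prod_erase _ (fun i => (X i : MvPolynomial (Fin n) ℝ) ^ r' i)
            (Finset.mem_univ j)]
          have : r' j = 0 := by simp [hr']
          rw [this, pow_zero, one_mul]
          apply Finset.prod_congr rfl
          intro i hi
          have hij : i ≠ j := (Finset.mem_erase.mp hi).1
          rw [hr']
          simp only [hij, if_false]
          rw [← pow_mul, mul_comm (r i) 2]
        have hsum' : ∑ i, r' i = 2 * (∑ i, r i) - 2 * r j := by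
          have hA : ∑ i, r' i = ∑ i ∈ Finset.univ.erase j, 2 * r i := by
            rw [← Finset.add_sum_erase _ r' (Finset.mem_univ j)]
            have h1 : r' j = 0 := by simp [hr']
            rw [h1, zero_add]
            exact Finset.sum_congr rfl fun i hi => by
              simp [hr', (Finset.mem_erase.mp hi).1]
          have hB : ∑ i, r i = r j + ∑ i ∈ Finset.univ.erase j, r i :=
            (Finset.add_sum_erase _ r (Finset.mem_univ j)).symm
          have hC : ∑ i ∈ Finset.univ.erase j, 2 * r i
              = 2 * ∑ i ∈ Finset.univ.erase j, r i := (Finset.mul_sum _ _ _).symm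
          omega
        have hrj_le : ∑ i, r i ≥ r j := Finset.single_le_sum (fun i _ => Nat.zero_le _) (Finset.mem_univ j)
        -- Cauchy–Schwarz
        have hcs := cs_aux α hpsd (X j ^ r j) g
        rw [← hsplit] at hcs
        have hf2 : ((X j : MvPolynomial (Fin n) ℝ) ^ r j) ^ 2 = X j ^ (2 * r j) := by
          rw [← pow_mul, mul_comm]
        have hb1 : α (((X j : MvPolynomial (Fin n) ℝ) ^ r j) ^ 2) ≤ d ^ (2 * r j) := by
          rw [hf2]
          exact (le_abs_self _).trans (hbd j (2 * r j))
        have hb2 : α (g ^ 2) ≤ d ^ (∑ i, r' i) := by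
          rw [hg2]
          exact (le_abs_self _).trans (ih r' hcard)
        have hnn1 : 0 ≤ α (((X j : MvPolynomial (Fin n) ℝ) ^ r j) ^ 2) := hpsd _
        have hnn2 : 0 ≤ α (g ^ 2) := hpsd _
        have hdn : (0:ℝ) ≤ d := le_of_lt hd
        have hsq : (α (∏ i, (X i : MvPolynomial (Fin n) ℝ) ^ r i)) ^ 2
            ≤ (d ^ (∑ i, r i)) ^ 2 := by
          calc (α (∏ i, (X i : MvPolynomial (Fin n) ℝ) ^ r i)) ^ 2
              ≤ α (((X j : MvPolynomial (Fin n) ℝ) ^ r j) ^ 2) * α (g ^ 2) := hcs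
            _ ≤ d ^ (2 * r j) * d ^ (∑ i, r' i) :=
                mul_le_mul hb1 hb2 hnn2 (pow_nonneg hdn _)
            _ = d ^ (2 * r j + ∑ i, r' i) := (pow_add d _ _).symm
            _ = d ^ (2 * (∑ i, r i)) := by rw [hsum']; congr 1; omega
            _ = (d ^ (∑ i, r i)) ^ 2 := by rw [← pow_mul, mul_comm]
        rw [abs_le]
        constructor <;> nlinarith [hsq, pow_nonneg hdn (∑ i, r i)]
  exact main _ r le_rfl
end

section
/- Let α : ℝ[x₁,...,xₙ] → ℝ be defined by α(p) = Σ_{i=1}^k hᵢ p(aᵢ) where a₁,...,a_k ∈ ℝⁿ are pairwise distinct points and h₁,...,h_k are positive reals. Then α is positive semidefinite (α(p²) ≥ 0 for all p), and the bilinear form ⟨p₁,p₂⟩ = α(p₁p₂) on ℝ[x₁,...,xₙ] has rank exactly k. -/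
open MvPolynomial in
lemma interp_aux {n k : ℕ} (a : Fin k → (Fin n → ℝ)) (ha : Function.Injective a) (i : Fin k) :
    ∃ p : MvPolynomial (Fin n) ℝ, ∀ j, eval (a j) p = if j = i then 1 else 0 := by
  classical
  refine ⟨∏ j ∈ Finset.univ.erase i,
      (if h : a i = a j then 1 else
        (C (a i (Function.ne_iff.mp h).choose - a j (Function.ne_iff.mp h).choose)⁻¹ *
          (X (Function.ne_iff.mp h).choose - C (a j (Function.ne_iff.mp h).choose)))), ?_⟩
  intro j
  rw [map_prod]
  by_cases hji : j = i
  · subst hji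
    rw [if_pos rfl]
    apply Finset.prod_eq_one
    intro l hl
    have hne : a j ≠ a l := fun hc => (Finset.mem_erase.mp hl).1 (ha hc).symm
    rw [dif_neg hne]
    have hc := (Function.ne_iff.mp hne).choose_spec
    simp only [map_mul, map_sub, eval_C, eval_X]
    exact inv_mul_cancel₀ (sub_ne_zero.mpr hc)
  · rw [if_neg hji]
    apply Finset.prod_eq_zero (Finset.mem_erase.mpr ⟨hji, Finset.mem_univ j⟩)
    have hne : a i ≠ a j := fun hc => hji (ha hc).symm
    rw [dif_neg hne]
    simp

theorem stmt5 (n k : ℕ) (a : Fin k → (Fin n → ℝ)) (h : Fin k → ℝ)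
    (ha : Function.Injective a) (hh : ∀ i, 0 < h i)
    (α : MvPolynomial (Fin n) ℝ →ₗ[ℝ] ℝ)
    (hα : ∀ p, α p = ∑ i, h i * MvPolynomial.eval (a i) p)
    (R : Submodule ℝ (MvPolynomial (Fin n) ℝ))
    (hR : ∀ p, p ∈ R ↔ ∀ q, α (p * q) = 0) :
    (∀ p : MvPolynomial (Fin n) ℝ, 0 ≤ α (p ^ 2)) ∧
      Module.finrank ℝ (MvPolynomial (Fin n) ℝ ⧸ R) = k := by
  classical
  constructor
  · intro p
    rw [hα]
    apply Finset.sum_nonneg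
    intro i _
    rw [map_pow]
    have := (hh i).le
    positivity
  · -- the evaluation linear map
    let E : MvPolynomial (Fin n) ℝ →ₗ[ℝ] (Fin k → ℝ) :=
      { toFun := fun p i => MvPolynomial.eval (a i) p
        map_add' := by intro p q; funext i; simp
        map_smul' := by intro c p; funext i; simp }
    have hEapp : ∀ p i, E p i = MvPolynomial.eval (a i) p := fun _ _ => rfl
    have hker : R = LinearMap.ker E := by
      ext p
      rw [hR, LinearMap.mem_ker]
      constructor
      · intro hp
        have h0 : ∑ i, h i * (MvPolynomial.eval (a i) p) ^ 2 = 0 := by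
          have := hp p
          rw [hα] at this
          simpa [sq] using this
        funext i
        have hall := (Finset.sum_eq_zero_iff_of_nonneg (by
          intro i _
          have := (hh i).le
          positivity)).mp h0 i (Finset.mem_univ i)
        have h2 : (MvPolynomial.eval (a i) p) ^ 2 = 0 := by
          exact (mul_eq_zero.mp hall).resolve_left (hh i).ne'
        have := pow_eq_zero_iff (n := 2) (by norm_num) |>.mp h2
        simpa [hEapp] using this
      · intro hp q
        rw [hα]
        apply Finset.sum_eq_zero
        intro i _
        have : MvPolynomial.eval (a i) p = 0 := by
          have := congrFun hp i
          simpa [hEapp] using this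
        simp [this]
    have hsurj : Function.Surjective E := by
      intro v
      choose p hp using fun i => interp_aux a ha i
      refine ⟨∑ i, v i • p i, ?_⟩
      funext j
      simp only [hEapp, map_sum, MvPolynomial.smul_eval]
      simp [hp, Finset.sum_ite_eq]
    have e : (MvPolynomial (Fin n) ℝ ⧸ R) ≃ₗ[ℝ] (Fin k → ℝ) := by
      rw [hker]
      exact LinearMap.quotKerEquivOfSurjective E hsurj
    rw [e.finrank_eq]
    simp [Module.finrank_pi]
end

section
/- Let H be a randomly weighted graph with vertex set V, positive node weights αᵢ, and independent finitely-supported random edge weights B_{ij}, and let f = hom(·,H) with hom(F,H) = Σ_{φ:V(F)→V} ∏_i α_{φ(i)} ∏_{ij∈E(F)} E(B_{φ(i)φ(j)}^{F_{ij}}), where F_{ij} is the multiplicity of edge ij. Then for every n, the dimension of the quotient PPₙ/f equals the number of distinct weighted graphs L on node set {1,...,n} (node weights 1) for which there exists φ: [n] → V such that every edge weight λ_{ij} of L lies in the support of B_{φ(i)φ(j)}. -/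
open Finset

/-- The index type for edges of graphs on node set `Fin n`: ordered pairs `i < j`. -/
def EdgeIdx (n : ℕ) := {p : Fin n × Fin n // p.1 < p.2}

instance (n : ℕ) : Fintype (EdgeIdx n) := by unfold EdgeIdx; infer_instance

/-- Homomorphism number of the multigraph on `[n]` with edge multiplicities `m` into the
randomly weighted graph with node weights `α` and edge weight distributions supported on
`S u v` with probability mass `P u v`. -/
noncomputable def homRWmon {V : Type} [Fintype V] (α : V → ℝ) (S : V → V → Finset ℝ)
    (P : V → V → ℝ → ℝ) {n : ℕ} (m : EdgeIdx n →₀ ℕ) : ℝ :=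
  ∑ φ : Fin n → V, (∏ v, α (φ v)) *
    ∏ e : EdgeIdx n, ∑ s ∈ S (φ e.1.1) (φ e.1.2), P (φ e.1.1) (φ e.1.2) s * s ^ m e

lemma interp_aux_s15 {ι : Type} [Fintype ι] (Ls : Finset (ι → ℝ)) (g : ↥Ls → ℝ) :
    ∃ p : MvPolynomial ι ℝ, ∀ L : ↥Ls, MvPolynomial.eval (L : ι → ℝ) p = g L := by
  classical
  let q : ↥Ls → ↥Ls → MvPolynomial ι ℝ := fun L₀ L =>
    if h : ∃ e, (L : ι → ℝ) e ≠ (L₀ : ι → ℝ) e then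
      MvPolynomial.C (((L₀ : ι → ℝ) h.choose - (L : ι → ℝ) h.choose)⁻¹) *
        (MvPolynomial.X h.choose - MvPolynomial.C ((L : ι → ℝ) h.choose))
    else 1
  have hex : ∀ L₀ L : ↥Ls, L ≠ L₀ → ∃ e, (L : ι → ℝ) e ≠ (L₀ : ι → ℝ) e := by
    intro L₀ L hne
    by_contra hc
    push_neg at hc
    exact hne (Subtype.ext (funext hc))
  have hq0 : ∀ L₀ L : ↥Ls, L ≠ L₀ → MvPolynomial.eval (L : ι → ℝ) (q L₀ L) = 0 := by
    intro L₀ L hne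
    have h := hex L₀ L hne
    simp only [q, dif_pos h]
    simp
  have hq1 : ∀ L₀ L : ↥Ls, L ≠ L₀ → MvPolynomial.eval (L₀ : ι → ℝ) (q L₀ L) = 1 := by
    intro L₀ L hne
    have h := hex L₀ L hne
    have hspec := h.choose_spec
    simp only [q, dif_pos h]
    simp only [map_mul, MvPolynomial.eval_C, map_sub, MvPolynomial.eval_X]
    rw [inv_mul_cancel₀ (sub_ne_zero.mpr (Ne.symm hspec))]
  refine ⟨∑ L₀ : ↥Ls, MvPolynomial.C (g L₀) * ∏ L ∈ Finset.univ.erase L₀, q L₀ L, ?_⟩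
  intro L'
  rw [map_sum, Finset.sum_eq_single L']
  · rw [map_mul, MvPolynomial.eval_C, map_prod]
    rw [Finset.prod_eq_one fun L hL => hq1 L' L (Finset.ne_of_mem_erase hL)]
    ring
  · intro L₀ _ hne
    rw [map_mul, map_prod, Finset.prod_eq_zero
      (Finset.mem_erase.mpr ⟨hne.symm, Finset.mem_univ L'⟩) (hq0 L₀ L' hne.symm)]
    ring
  · intro h
    exact absurd (Finset.mem_univ L') h

set_option maxHeartbeats 1000000 in
theorem stmt15 (V : Type) [Fintype V] [DecidableEq V] [Nonempty V] (n : ℕ)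
    (α : V → ℝ) (hαpos : ∀ v, 0 < α v)
    (S : V → V → Finset ℝ) (P : V → V → ℝ → ℝ)
    (hSsym : ∀ u v, S u v = S v u) (hPsym : ∀ u v s, P u v s = P v u s)
    (hSne : ∀ u v, (S u v).Nonempty)
    (hPpos : ∀ u v, ∀ s ∈ S u v, 0 < P u v s)
    (hPsum : ∀ u v, ∑ s ∈ S u v, P u v s = 1)
    -- `F` is the linear extension of `hom(·,H)` to the algebra `PPₙ = ℝ[z_{ij}]`,
    -- whose monomials correspond to multigraphs on node set `[n]`
    (F : MvPolynomial (EdgeIdx n) ℝ →ₗ[ℝ] ℝ)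
    (hF : ∀ m : EdgeIdx n →₀ ℕ, F (MvPolynomial.monomial m 1) = homRWmon α S P m)
    -- `R` is the radical of the bilinear form `⟨p,q⟩ = F(pq)`
    (R : Submodule ℝ (MvPolynomial (EdgeIdx n) ℝ))
    (hR : ∀ p, p ∈ R ↔ ∀ q, F (p * q) = 0) :
    Module.finrank ℝ (MvPolynomial (EdgeIdx n) ℝ ⧸ R)
      = Set.ncard {L : EdgeIdx n → ℝ |
          ∃ φ : Fin n → V, ∀ e : EdgeIdx n, L e ∈ S (φ e.1.1) (φ e.1.2)} := by
  classical
  have aeval_eq : ∀ (x : EdgeIdx n → ℝ) (p : MvPolynomial (EdgeIdx n) ℝ),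
      MvPolynomial.aeval x p = MvPolynomial.eval x p := by
    intro x p
    rw [← MvPolynomial.coe_aeval_eq_eval]
    rfl
  let w : (Fin n → V) → (EdgeIdx n → ℝ) → ℝ := fun φ L =>
    (∏ v, α (φ v)) * ∏ e : EdgeIdx n, P (φ e.1.1) (φ e.1.2) (L e)
  let T : (Fin n → V) → Finset (EdgeIdx n → ℝ) := fun φ =>
    Fintype.piFinset (fun e : EdgeIdx n => S (φ e.1.1) (φ e.1.2))
  let Lset : Finset (EdgeIdx n → ℝ) := Finset.univ.biUnion T
  have hwpos : ∀ φ L, L ∈ T φ → 0 < w φ L := by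
    intro φ L hL
    apply mul_pos (Finset.prod_pos fun v _ => hαpos (φ v))
    exact Finset.prod_pos fun e _ => hPpos _ _ _ ((Fintype.mem_piFinset.mp hL) e)
  -- key formula for F
  have keyF : ∀ p, F p = ∑ φ : Fin n → V, ∑ L ∈ T φ,
      w φ L * MvPolynomial.eval L p := by
    have hFeq : F = ∑ φ : Fin n → V, ∑ L ∈ T φ,
        w φ L • (MvPolynomial.aeval (R := ℝ) L).toLinearMap := by
      apply (MvPolynomial.basisMonomials (EdgeIdx n) ℝ).ext
      intro m
      simp only [MvPolynomial.coe_basisMonomials, LinearMap.sum_apply,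
        LinearMap.smul_apply, AlgHom.toLinearMap_apply,
        MvPolynomial.aeval_monomial, map_one, one_mul, Finsupp.prod_pow, smul_eq_mul]
      rw [hF]
      unfold homRWmon
      refine Finset.sum_congr rfl fun φ _ => ?_
      rw [Finset.prod_univ_sum, Finset.mul_sum]
      refine Finset.sum_congr rfl fun L hL => ?_
      simp only [w]
      rw [Finset.prod_mul_distrib]
      ring
    intro p
    rw [hFeq]
    simp only [LinearMap.sum_apply, LinearMap.smul_apply, AlgHom.toLinearMap_apply,
      smul_eq_mul]
    refine Finset.sum_congr rfl fun φ _ => Finset.sum_congr rfl fun L _ => ?_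
    rw [aeval_eq]
  -- R is the common kernel of evaluations at Lset
  have hRker : ∀ p, p ∈ R ↔ ∀ L ∈ Lset, MvPolynomial.eval L p = 0 := by
    intro p
    rw [hR]
    constructor
    · intro h L hL
      have h0 := h p
      rw [keyF] at h0
      have hnn : ∀ φ L', L' ∈ T φ → 0 ≤ w φ L' * MvPolynomial.eval L' (p * p) := by
        intro φ L' hL'
        rw [map_mul]
        have := (hwpos φ L' hL').le
        nlinarith [mul_self_nonneg (MvPolynomial.eval L' p)]
      have houter : ∀ φ ∈ (Finset.univ : Finset (Fin n → V)),
          ∑ L' ∈ T φ, w φ L' * MvPolynomial.eval L' (p * p) = 0 := by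
        rw [← Finset.sum_eq_zero_iff_of_nonneg
          (fun φ _ => Finset.sum_nonneg fun L' hL' => hnn φ L' hL')]
        exact h0
      obtain ⟨φ, -, hLT⟩ := Finset.mem_biUnion.mp hL
      have hterm := (Finset.sum_eq_zero_iff_of_nonneg
        (fun L' hL' => hnn φ L' hL')).mp (houter φ (Finset.mem_univ φ)) L hLT
      rw [map_mul] at hterm
      have hw := hwpos φ L hLT
      rcases mul_eq_zero.mp hterm with h1 | h1
      · exact absurd h1 hw.ne'
      · exact mul_self_eq_zero.mp h1
    · intro h q
      rw [keyF]
      refine Finset.sum_eq_zero fun φ _ => Finset.sum_eq_zero fun L hL => ?_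
      have : MvPolynomial.eval L p = 0 :=
        h L (Finset.mem_biUnion.mpr ⟨φ, Finset.mem_univ φ, hL⟩)
      rw [map_mul, this]
      ring
  -- evaluation linear map
  let E : MvPolynomial (EdgeIdx n) ℝ →ₗ[ℝ] (↥Lset → ℝ) :=
    LinearMap.pi fun L => (MvPolynomial.aeval (R := ℝ) (L : EdgeIdx n → ℝ)).toLinearMap
  have hEapp : ∀ p (L : ↥Lset), E p L = MvPolynomial.eval (L : EdgeIdx n → ℝ) p := by
    intro p L
    simp only [E, LinearMap.pi_apply, AlgHom.toLinearMap_apply]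
    exact aeval_eq _ _
  have hRE : R = LinearMap.ker E := by
    ext p
    rw [hRker, LinearMap.mem_ker]
    constructor
    · intro h
      funext L
      rw [hEapp]
      exact h L L.2
    · intro h L hL
      have := congrFun h ⟨L, hL⟩
      rwa [hEapp] at this
  -- surjectivity of E
  have hsurj : Function.Surjective E := by
    intro g
    obtain ⟨p, hp⟩ := interp_aux_s15 Lset g
    exact ⟨p, funext fun L' => by rw [hEapp]; exact hp L'⟩
  -- conclude
  have hsetcard : {L : EdgeIdx n → ℝ |
      ∃ φ : Fin n → V, ∀ e : EdgeIdx n, L e ∈ S (φ e.1.1) (φ e.1.2)} = ↑Lset := by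
    ext L
    simp only [Set.mem_setOf_eq, Lset, Finset.mem_coe, Finset.mem_biUnion,
      Finset.mem_univ, true_and, T, Fintype.mem_piFinset]
  rw [hsetcard, Set.ncard_coe_finset, hRE,
    (LinearMap.quotKerEquivOfSurjective E hsurj).finrank_eq,
    Module.finrank_fintype_fun_eq_card, Fintype.card_coe]
end

section
/- Let Z be a random weighted graph on node set [n] with all node weights 1 and random edge weights z_{ij} ∈ [-1,1], and let f be a normalized multiplicative graph parameter such that f(F) = E(t_inj(F,Z)) and f(F²) = f(F)² for all multigraphs F, where F² is the disjoint union of two copies of F. Then for every multigraph F with m nodes (m ≤ n), Var(t_inj(F,Z)) ≤ 6m²/n. -/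
open MeasureTheory Set Finset

/-- A multiplicity matrix is a multigraph: symmetric with zero diagonal. -/
def IsMultigraph {m : ℕ} (F : Fin m → Fin m → ℕ) : Prop :=
  (∀ i j, F i j = F j i) ∧ ∀ i, F i i = 0

/-- The disjoint union of two multigraphs given by multiplicity matrices. -/
def blockAdd {m m' : ℕ} (F₁ : Fin m → Fin m → ℕ) (F₂ : Fin m' → Fin m' → ℕ) :
    Fin (m + m') → Fin (m + m') → ℕ := fun i j =>
  match finSumFinEquiv.symm i, finSumFinEquiv.symm j with
  | Sum.inl a, Sum.inl b => F₁ a b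
  | Sum.inr a, Sum.inr b => F₂ a b
  | _, _ => 0

/-- Normalized injective homomorphism density of a multigraph `F` (multiplicity matrix on
`Fin N`) in a weighted graph on `Fin n` with node weights `1` and edge weights `w`. -/
noncomputable def tinj {N n : ℕ} (F : Fin N → Fin N → ℕ) (w : Fin n → Fin n → ℝ) : ℝ :=
  (∑ φ ∈ Finset.univ.filter (fun φ : Fin N → Fin n => Function.Injective φ),
    ∏ i, ∏ j, if i < j then w (φ i) (φ j) ^ F i j else 1) / (n.descFactorial N : ℝ)

/-! ### Auxiliary definitions -/

/-- The weight product of a (not necessarily injective) map. -/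
noncomputable def wprod {N n : ℕ} (F : Fin N → Fin N → ℕ) (w : Fin n → Fin n → ℝ)
    (φ : Fin N → Fin n) : ℝ :=
  ∏ i, ∏ j, if i < j then w (φ i) (φ j) ^ F i j else 1

/-- Unnormalized full homomorphism sum. -/
noncomputable def SAll {N n : ℕ} (F : Fin N → Fin N → ℕ) (w : Fin n → Fin n → ℝ) : ℝ :=
  ∑ φ : Fin N → Fin n, wprod F w φ

/-- Full homomorphism density. -/
noncomputable def thom {N n : ℕ} (F : Fin N → Fin N → ℕ) (w : Fin n → Fin n → ℝ) : ℝ :=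
  SAll F w / (n : ℝ) ^ N

lemma tinj_eq {N n : ℕ} (F : Fin N → Fin N → ℕ) (w : Fin n → Fin n → ℝ) :
    tinj F w = (∑ φ ∈ Finset.univ.filter (fun φ : Fin N → Fin n => Function.Injective φ),
      wprod F w φ) / (n.descFactorial N : ℝ) := rfl

lemma card_injFilter (N n : ℕ) :
    (Finset.univ.filter (fun φ : Fin N → Fin n => Function.Injective φ)).card
      = n.descFactorial N := by
  classical
  rw [← Fintype.card_subtype,
    Fintype.card_congr (Equiv.subtypeInjectiveEquivEmbedding (Fin N) (Fin n)),
    Fintype.card_embedding_eq, Fintype.card_fin, Fintype.card_fin]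

lemma abs_wprod_le_one {N n : ℕ} (F : Fin N → Fin N → ℕ) {w : Fin n → Fin n → ℝ}
    (hw : ∀ i j, w i j ∈ Icc (-1 : ℝ) 1) (φ : Fin N → Fin n) :
    |wprod F w φ| ≤ 1 := by
  unfold wprod
  rw [Finset.abs_prod]
  refine Finset.prod_le_one (fun i _ => abs_nonneg _) (fun i _ => ?_)
  rw [Finset.abs_prod]
  refine Finset.prod_le_one (fun j _ => abs_nonneg _) (fun j _ => ?_)
  split
  · rw [abs_pow]
    exact pow_le_one₀ (abs_nonneg _) (abs_le.mpr (hw _ _))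
  · simp

lemma abs_sum_wprod_le {N n : ℕ} (F : Fin N → Fin N → ℕ) {w : Fin n → Fin n → ℝ}
    (hw : ∀ i j, w i j ∈ Icc (-1 : ℝ) 1) (s : Finset (Fin N → Fin n)) :
    |∑ φ ∈ s, wprod F w φ| ≤ (s.card : ℝ) := by
  calc |∑ φ ∈ s, wprod F w φ| ≤ ∑ φ ∈ s, |wprod F w φ| := Finset.abs_sum_le_sum_abs _ _
    _ ≤ ∑ _φ ∈ s, (1 : ℝ) := Finset.sum_le_sum fun φ _ => abs_wprod_le_one F hw φ
    _ = s.card := by simp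

lemma abs_tinj_le_one {N n : ℕ} (F : Fin N → Fin N → ℕ) {w : Fin n → Fin n → ℝ}
    (hw : ∀ i j, w i j ∈ Icc (-1 : ℝ) 1) : |tinj F w| ≤ 1 := by
  rw [tinj_eq]
  rcases Nat.eq_zero_or_pos (n.descFactorial N) with h | h
  · have hcard : (Finset.univ.filter
        (fun φ : Fin N → Fin n => Function.Injective φ)).card = 0 := by
      rw [card_injFilter]; exact h
    rw [Finset.card_eq_zero.mp hcard]
    simp
  · rw [abs_div, abs_of_pos (by exact_mod_cast h : (0:ℝ) < (n.descFactorial N : ℝ)),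
      div_le_one (by exact_mod_cast h)]
    calc |_| ≤ _ := abs_sum_wprod_le F hw _
      _ = (n.descFactorial N : ℝ) := by rw [card_injFilter]

lemma abs_thom_le_one {N n : ℕ} (F : Fin N → Fin N → ℕ) {w : Fin n → Fin n → ℝ}
    (hw : ∀ i j, w i j ∈ Icc (-1 : ℝ) 1) : |thom F w| ≤ 1 := by
  unfold thom
  rcases eq_or_lt_of_le (pow_nonneg (Nat.cast_nonneg n) N : (0:ℝ) ≤ (n:ℝ)^N) with h | h
  · rw [← h, div_zero, abs_zero]; exact zero_le_one
  · rw [abs_div, abs_of_pos h, div_le_one h]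
    calc |SAll F w| ≤ ((Finset.univ : Finset (Fin N → Fin n)).card : ℝ) :=
          abs_sum_wprod_le F hw _
      _ = (n:ℝ)^N := by
          simp [Finset.card_univ]

/-- The key counting inequality. -/
lemma desc_key (n : ℕ) : ∀ N : ℕ,
    ((n : ℝ) ^ N - (n.descFactorial N : ℝ)) * n ≤ (N * (N - 1) / 2) * (n : ℝ) ^ N := by
  intro N
  induction N with
  | zero => simp
  | succ N ih =>
    have hn0 : (0:ℝ) ≤ n := Nat.cast_nonneg n
    have hd_le : ((n.descFactorial N : ℝ)) ≤ (n:ℝ)^N := by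
      exact_mod_cast Nat.descFactorial_le_pow n N
    have hd_nonneg : (0:ℝ) ≤ (n.descFactorial N : ℝ) := Nat.cast_nonneg _
    have hsub : ((n:ℝ) - N) * (n.descFactorial N : ℝ) ≤ (n.descFactorial (N+1) : ℝ) := by
      rw [Nat.descFactorial_succ]
      rcases le_or_gt N n with h | h
      · rw [Nat.cast_mul, Nat.cast_sub h]
      · have h1 : (n:ℝ) - N < 0 := by
          have : (n:ℝ) < N := by exact_mod_cast h
          linarith
        have h0 : ((n - N) * n.descFactorial N : ℕ) = 0 := by
          rw [Nat.sub_eq_zero_of_le h.le, Nat.zero_mul]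
        rw [h0]
        push_cast
        nlinarith
    have hN0 : (0:ℝ) ≤ N := Nat.cast_nonneg N
    rw [pow_succ]
    push_cast
    push_cast at ih hsub
    nlinarith [mul_le_mul_of_nonneg_right ih hn0,
      mul_le_mul_of_nonneg_right hsub hn0,
      mul_le_mul_of_nonneg_right (mul_le_mul_of_nonneg_left hd_le hN0) hn0,
      mul_nonneg (mul_nonneg hN0 hd_nonneg) hn0]

lemma thom_sub_tinj {N n : ℕ} (hn : 0 < n) (hNn : N ≤ n) (F : Fin N → Fin N → ℕ)
    {w : Fin n → Fin n → ℝ} (hw : ∀ i j, w i j ∈ Icc (-1 : ℝ) 1) :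
    |thom F w - tinj F w| ≤ (N : ℝ) * ((N : ℝ) - 1) / n := by
  classical
  set s := Finset.univ.filter (fun φ : Fin N → Fin n => Function.Injective φ) with hs
  set A := ∑ φ ∈ s, wprod F w φ with hA
  set B := ∑ φ ∈ Finset.univ.filter
      (fun φ : Fin N → Fin n => ¬ Function.Injective φ), wprod F w φ with hB
  set d : ℝ := (n.descFactorial N : ℝ) with hd
  set p : ℝ := (n:ℝ)^N with hp
  have hn' : (0:ℝ) < n := by exact_mod_cast hn
  have hdpos : (0:ℝ) < d := by
    rw [hd]
    have h0 : n.descFactorial N ≠ 0 := by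
      intro h0
      exact absurd (Nat.descFactorial_eq_zero_iff_lt.mp h0) (not_lt.mpr hNn)
    exact_mod_cast Nat.pos_of_ne_zero h0
  have hppos : (0:ℝ) < p := by rw [hp]; positivity
  have hdp : d ≤ p := by
    rw [hd, hp]
    exact_mod_cast Nat.descFactorial_le_pow n N
  have hAd : |A| ≤ d := by
    rw [hA, hd, ← card_injFilter N n]
    exact abs_sum_wprod_le F hw s
  have hfn : (Finset.univ.filter
      (fun φ : Fin N → Fin n => ¬ Function.Injective φ)).card
      = n ^ N - n.descFactorial N := by
    rw [Finset.filter_not, Finset.card_sdiff_of_subset (Finset.filter_subset _ _), card_injFilter]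
    simp [Finset.card_univ]
  have hBd : |B| ≤ p - d := by
    have h := abs_sum_wprod_le F hw (Finset.univ.filter
      (fun φ : Fin N → Fin n => ¬ Function.Injective φ))
    rw [hfn, Nat.cast_sub (Nat.descFactorial_le_pow n N)] at h
    rw [hB, hp, hd]
    exact_mod_cast h
  have hSAll : SAll F w = A + B := by
    rw [hA, hB, hs, Finset.sum_filter_add_sum_filter_not]
    rfl
  have hthom : thom F w = (A + B) / p := by rw [thom, hSAll, hp]
  have htinj : tinj F w = A / d := by rw [tinj_eq, ← hs, ← hA, ← hd]
  have b1 : |B / p| ≤ (p - d) / p := by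
    rw [abs_div, abs_of_pos hppos]
    gcongr
  have b2 : |A / p - A / d| ≤ (p - d) / p := by
    have he : A / p - A / d = A * ((d - p) / (p * d)) := by
      field_simp
    rw [he, abs_mul, abs_div, abs_of_pos (mul_pos hppos hdpos), abs_sub_comm,
      abs_of_nonneg (sub_nonneg.mpr hdp)]
    calc |A| * ((p - d) / (p * d)) ≤ d * ((p - d) / (p * d)) := by
          apply mul_le_mul_of_nonneg_right hAd
          exact div_nonneg (sub_nonneg.mpr hdp) (le_of_lt (mul_pos hppos hdpos))
      _ = (p - d) / p := by
          field_simp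
  have hratio : (p - d) / p ≤ ((N:ℝ) * ((N:ℝ) - 1) / 2) / n := by
    rw [div_le_div_iff₀ hppos hn']
    calc (p - d) * n ≤ (N * (N - 1) / 2) * (n : ℝ) ^ N := desc_key n N
      _ = (N:ℝ) * ((N:ℝ) - 1) / 2 * p := by rw [hp]
  calc |thom F w - tinj F w| = |B / p + (A / p - A / d)| := by
        rw [hthom, htinj]
        congr 1
        ring
    _ ≤ |B / p| + |A / p - A / d| := abs_add_le _ _
    _ ≤ (p - d) / p + (p - d) / p := add_le_add b1 b2
    _ = 2 * ((p - d) / p) := by ring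
    _ ≤ 2 * (((N:ℝ) * ((N:ℝ) - 1) / 2) / n) := by linarith
    _ = (N : ℝ) * ((N : ℝ) - 1) / n := by ring

/-! ### Factorization over disjoint union -/

lemma blockAdd_ll {m m' : ℕ} (F₁ : Fin m → Fin m → ℕ) (F₂ : Fin m' → Fin m' → ℕ)
    (a b : Fin m) :
    blockAdd F₁ F₂ (finSumFinEquiv (Sum.inl a)) (finSumFinEquiv (Sum.inl b)) = F₁ a b := by
  unfold blockAdd
  rw [Equiv.symm_apply_apply, Equiv.symm_apply_apply]

lemma blockAdd_rr {m m' : ℕ} (F₁ : Fin m → Fin m → ℕ) (F₂ : Fin m' → Fin m' → ℕ)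
    (a b : Fin m') :
    blockAdd F₁ F₂ (finSumFinEquiv (Sum.inr a)) (finSumFinEquiv (Sum.inr b)) = F₂ a b := by
  unfold blockAdd
  rw [Equiv.symm_apply_apply, Equiv.symm_apply_apply]

lemma blockAdd_lr {m m' : ℕ} (F₁ : Fin m → Fin m → ℕ) (F₂ : Fin m' → Fin m' → ℕ)
    (a : Fin m) (b : Fin m') :
    blockAdd F₁ F₂ (finSumFinEquiv (Sum.inl a)) (finSumFinEquiv (Sum.inr b)) = 0 := by
  unfold blockAdd
  rw [Equiv.symm_apply_apply, Equiv.symm_apply_apply]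

lemma blockAdd_rl {m m' : ℕ} (F₁ : Fin m → Fin m → ℕ) (F₂ : Fin m' → Fin m' → ℕ)
    (a : Fin m') (b : Fin m) :
    blockAdd F₁ F₂ (finSumFinEquiv (Sum.inr a)) (finSumFinEquiv (Sum.inl b)) = 0 := by
  unfold blockAdd
  rw [Equiv.symm_apply_apply, Equiv.symm_apply_apply]

lemma fin_lt_ll {m m' : ℕ} (a b : Fin m) :
    (finSumFinEquiv (Sum.inl a : Fin m ⊕ Fin m') < finSumFinEquiv (Sum.inl b)) ↔ a < b := by
  rw [finSumFinEquiv_apply_left, finSumFinEquiv_apply_left, Fin.lt_def, Fin.lt_def,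
    Fin.coe_castAdd, Fin.coe_castAdd]

lemma fin_lt_rr {m m' : ℕ} (a b : Fin m') :
    (finSumFinEquiv (Sum.inr a : Fin m ⊕ Fin m') < finSumFinEquiv (Sum.inr b)) ↔ a < b := by
  rw [finSumFinEquiv_apply_right, finSumFinEquiv_apply_right, Fin.lt_def, Fin.lt_def,
    Fin.coe_natAdd, Fin.coe_natAdd]
  omega

lemma wprod_block {m n : ℕ} (F : Fin m → Fin m → ℕ) (w : Fin n → Fin n → ℝ)
    (φ ψ : Fin m → Fin n) :
    wprod (blockAdd F F) w (fun i => Sum.elim φ ψ (finSumFinEquiv.symm i))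
      = wprod F w φ * wprod F w ψ := by
  classical
  set Φ : Fin (m + m) → Fin n := fun i => Sum.elim φ ψ (finSumFinEquiv.symm i) with hΦ
  have hl : ∀ a : Fin m, Φ (finSumFinEquiv (Sum.inl a)) = φ a := fun a => by
    simp only [hΦ, Equiv.symm_apply_apply, Sum.elim_inl]
  have hr : ∀ a : Fin m, Φ (finSumFinEquiv (Sum.inr a)) = ψ a := fun a => by
    simp only [hΦ, Equiv.symm_apply_apply, Sum.elim_inr]
  show (∏ i, ∏ j, if i < j then w (Φ i) (Φ j) ^ blockAdd F F i j else 1)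
      = wprod F w φ * wprod F w ψ
  rw [← Equiv.prod_comp finSumFinEquiv
    (fun i => ∏ j, if i < j then w (Φ i) (Φ j) ^ blockAdd F F i j else 1)]
  have step1 : (∏ s : Fin m ⊕ Fin m, ∏ j, if finSumFinEquiv s < j then
        w (Φ (finSumFinEquiv s)) (Φ j) ^ blockAdd F F (finSumFinEquiv s) j else 1)
      = ∏ s : Fin m ⊕ Fin m, ∏ t : Fin m ⊕ Fin m,
          (if finSumFinEquiv s < finSumFinEquiv t then
            w (Φ (finSumFinEquiv s)) (Φ (finSumFinEquiv t))
              ^ blockAdd F F (finSumFinEquiv s) (finSumFinEquiv t) else 1) :=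
    Finset.prod_congr rfl fun s _ => (Equiv.prod_comp finSumFinEquiv _).symm
  rw [step1]
  simp only [Fintype.prod_sum_type]
  rw [Finset.prod_mul_distrib, Finset.prod_mul_distrib]
  have hll : (∏ a : Fin m, ∏ b : Fin m,
      if finSumFinEquiv (Sum.inl a : Fin m ⊕ Fin m) < finSumFinEquiv (Sum.inl b) then
        w (Φ (finSumFinEquiv (Sum.inl a))) (Φ (finSumFinEquiv (Sum.inl b)))
          ^ blockAdd F F (finSumFinEquiv (Sum.inl a)) (finSumFinEquiv (Sum.inl b)) else 1)
      = wprod F w φ := by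
    unfold wprod
    refine Finset.prod_congr rfl fun a _ => Finset.prod_congr rfl fun b _ => ?_
    rw [hl, hl, blockAdd_ll]
    exact if_congr (fin_lt_ll a b) rfl rfl
  have hrr : (∏ a : Fin m, ∏ b : Fin m,
      if finSumFinEquiv (Sum.inr a : Fin m ⊕ Fin m) < finSumFinEquiv (Sum.inr b) then
        w (Φ (finSumFinEquiv (Sum.inr a))) (Φ (finSumFinEquiv (Sum.inr b)))
          ^ blockAdd F F (finSumFinEquiv (Sum.inr a)) (finSumFinEquiv (Sum.inr b)) else 1)
      = wprod F w ψ := by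
    unfold wprod
    refine Finset.prod_congr rfl fun a _ => Finset.prod_congr rfl fun b _ => ?_
    rw [hr, hr, blockAdd_rr]
    exact if_congr (fin_lt_rr a b) rfl rfl
  have hlr : (∏ a : Fin m, ∏ b : Fin m,
      if finSumFinEquiv (Sum.inl a : Fin m ⊕ Fin m) < finSumFinEquiv (Sum.inr b) then
        w (Φ (finSumFinEquiv (Sum.inl a))) (Φ (finSumFinEquiv (Sum.inr b)))
          ^ blockAdd F F (finSumFinEquiv (Sum.inl a)) (finSumFinEquiv (Sum.inr b)) else 1)
      = 1 := by
    refine Finset.prod_eq_one fun a _ => Finset.prod_eq_one fun b _ => ?_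
    rw [blockAdd_lr, pow_zero]
    exact ite_self 1
  have hrl : (∏ a : Fin m, ∏ b : Fin m,
      if finSumFinEquiv (Sum.inr a : Fin m ⊕ Fin m) < finSumFinEquiv (Sum.inl b) then
        w (Φ (finSumFinEquiv (Sum.inr a))) (Φ (finSumFinEquiv (Sum.inl b)))
          ^ blockAdd F F (finSumFinEquiv (Sum.inr a)) (finSumFinEquiv (Sum.inl b)) else 1)
      = 1 := by
    refine Finset.prod_eq_one fun a _ => Finset.prod_eq_one fun b _ => ?_
    rw [blockAdd_rl, pow_zero]
    exact ite_self 1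
  rw [hll, hrr, hlr, hrl]
  ring

lemma SAll_block {m n : ℕ} (F : Fin m → Fin m → ℕ) (w : Fin n → Fin n → ℝ) :
    SAll (blockAdd F F) w = SAll F w * SAll F w := by
  classical
  unfold SAll
  rw [← Equiv.sum_comp ((Equiv.sumArrowEquivProdArrow (Fin m) (Fin m) (Fin n)).symm.trans
      (Equiv.arrowCongr finSumFinEquiv (Equiv.refl (Fin n)))) (wprod (blockAdd F F) w),
    Fintype.sum_prod_type, Finset.sum_mul_sum]
  refine Finset.sum_congr rfl fun φ _ => Finset.sum_congr rfl fun ψ _ => ?_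
  have he : ((Equiv.sumArrowEquivProdArrow (Fin m) (Fin m) (Fin n)).symm.trans
      (Equiv.arrowCongr finSumFinEquiv (Equiv.refl (Fin n)))) (φ, ψ)
      = fun i => Sum.elim φ ψ (finSumFinEquiv.symm i) := by
    funext i
    simp [Equiv.sumArrowEquivProdArrow, Equiv.arrowCongr]
  rw [he, wprod_block]

lemma thom_block {m n : ℕ} (F : Fin m → Fin m → ℕ) (w : Fin n → Fin n → ℝ) :
    thom (blockAdd F F) w = thom F w * thom F w := by
  unfold thom
  rw [SAll_block, pow_add, div_mul_div_comm]

/-! ### Measurability and integrability -/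

lemma tinj_measurable {Ω : Type} [MeasurableSpace Ω] {N n : ℕ} (G : Fin N → Fin N → ℕ)
    (z : Ω → Fin n → Fin n → ℝ) (hz : ∀ i j, Measurable fun ω => z ω i j) :
    Measurable fun ω => tinj G (z ω) := by
  unfold tinj
  apply Measurable.div_const
  refine Finset.measurable_sum _ fun φ _ => Finset.measurable_prod _ fun i _ =>
    Finset.measurable_prod _ fun j _ => ?_
  split
  · exact (hz _ _).pow_const _
  · exact measurable_const

/-! ### Main pointwise bound -/

lemma pointwise_bound {m n : ℕ} (hn : 0 < n) (h2m : m + m ≤ n) (F : Fin m → Fin m → ℕ)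
    {w : Fin n → Fin n → ℝ} (hw : ∀ i j, w i j ∈ Icc (-1 : ℝ) 1) :
    (tinj F w) ^ 2 - tinj (blockAdd F F) w ≤ 6 * (m : ℝ) ^ 2 / n := by
  have hn' : (0:ℝ) < n := by exact_mod_cast hn
  have hm : m ≤ n := le_trans (Nat.le_add_right m m) h2m
  set T := tinj F w with hT
  set H := thom F w with hH
  set T2 := tinj (blockAdd F F) w with hT2
  have h1 : |H - T| ≤ (m : ℝ) * ((m : ℝ) - 1) / n := thom_sub_tinj hn hm F hw
  have h2 : |H * H - T2| ≤ ((m + m : ℕ) : ℝ) * (((m + m : ℕ) : ℝ) - 1) / n := by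
    rw [hH, ← thom_block, hT2]
    exact thom_sub_tinj hn h2m (blockAdd F F) hw
  have hTb := abs_tinj_le_one F hw
  have hHb := abs_thom_le_one F hw
  rw [← hT] at hTb
  rw [← hH] at hHb
  have h1' := abs_le.mp h1
  have h2' := abs_le.mp h2
  have hT' := abs_le.mp hTb
  have hH' := abs_le.mp hHb
  push_cast at h2'
  have key : T ^ 2 - T2 ≤ 2 * ((m : ℝ) * ((m : ℝ) - 1) / n)
      + ((m : ℝ) + (m : ℝ)) * ((m : ℝ) + (m : ℝ) - 1) / n := by
    have e1 : T ^ 2 - H * H = (T - H) * (T + H) := by ring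
    have e2 : (T - H) * (T + H) ≤ 2 * ((m : ℝ) * ((m : ℝ) - 1) / n) := by
      nlinarith [h1'.1, h1'.2, hT'.1, hT'.2, hH'.1, hH'.2]
    nlinarith [h2'.1, h2'.2]
  have hmR : (0:ℝ) ≤ (m : ℝ) := Nat.cast_nonneg m
  have e3 : 2 * ((m : ℝ) * ((m : ℝ) - 1) / n)
      + ((m : ℝ) + (m : ℝ)) * ((m : ℝ) + (m : ℝ) - 1) / n
      = (6 * (m : ℝ) ^ 2 - 4 * (m : ℝ)) / n := by ring
  have e4 : (6 * (m : ℝ) ^ 2 - 4 * (m : ℝ)) / n ≤ 6 * (m : ℝ) ^ 2 / n := by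
    gcongr
    linarith
  linarith [key, e3 ▸ (key.trans_eq e3)]

/-! ### Main theorem -/

theorem stmt19 (Ω : Type) [MeasureSpace Ω]
    (hP : IsProbabilityMeasure (volume : Measure Ω))
    (n : ℕ) (hn : 0 < n)
    -- `Z`: a random weighted graph on `[n]` with node weights 1 and random edge
    -- weights `z ω i j ∈ [-1,1]`
    (z : Ω → Fin n → Fin n → ℝ)
    (hzmeas : ∀ i j, Measurable fun ω => z ω i j)
    (hzsym : ∀ ω i j, z ω i j = z ω j i)
    (hzbd : ∀ ω i j, z ω i j ∈ Icc (-1 : ℝ) 1)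
    (m : ℕ) (hm : m ≤ n) (F : Fin m → Fin m → ℕ) (hF : IsMultigraph F)
    -- `f` is a normalized multiplicative graph parameter with `f(F) = E(t_inj(F,Z))`
    (f : ∀ N : ℕ, (Fin N → Fin N → ℕ) → ℝ)
    (hf : ∀ (N : ℕ) (G : Fin N → Fin N → ℕ), f N G = ∫ ω, tinj G (z ω))
    (hfnorm : f 1 (fun _ _ => 0) = 1)
    -- `f(F²) = f(F)²` where `F²` is the disjoint union of two copies of `F`
    (hsq : f (m + m) (blockAdd F F) = f m F * f m F) :
    (∫ ω, (tinj F (z ω)) ^ 2) - (∫ ω, tinj F (z ω)) ^ 2 ≤ 6 * (m : ℝ) ^ 2 / n := by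
  have hn' : (0:ℝ) < n := by exact_mod_cast hn
  have hTmeas : Measurable fun ω => tinj F (z ω) := tinj_measurable F z hzmeas
  have hT2meas : Measurable fun ω => tinj (blockAdd F F) (z ω) :=
    tinj_measurable (blockAdd F F) z hzmeas
  have hTbd : ∀ ω, |tinj F (z ω)| ≤ 1 := fun ω => abs_tinj_le_one F (hzbd ω)
  have hT2bd : ∀ ω, |tinj (blockAdd F F) (z ω)| ≤ 1 := fun ω =>
    abs_tinj_le_one (blockAdd F F) (hzbd ω)
  have hIT : Integrable (fun ω => tinj F (z ω)) :=
    Integrable.mono' (integrable_const 1) hTmeas.aestronglyMeasurable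
      (Filter.Eventually.of_forall hTbd)
  have hITsq : Integrable (fun ω => (tinj F (z ω)) ^ 2) :=
    Integrable.mono' (integrable_const 1) (hTmeas.pow_const 2).aestronglyMeasurable
      (Filter.Eventually.of_forall fun ω => by
        rw [Real.norm_eq_abs, abs_pow]
        calc |tinj F (z ω)| ^ 2 ≤ 1 ^ 2 := by
              exact pow_le_pow_left₀ (abs_nonneg _) (hTbd ω) 2
          _ = 1 := one_pow 2)
  have hIT2 : Integrable (fun ω => tinj (blockAdd F F) (z ω)) :=
    Integrable.mono' (integrable_const 1) hT2meas.aestronglyMeasurable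
      (Filter.Eventually.of_forall hT2bd)
  -- (∫ T)² = ∫ T2
  rw [hf, hf] at hsq
  have hEq : (∫ ω, tinj F (z ω)) ^ 2 = ∫ ω, tinj (blockAdd F F) (z ω) := by
    rw [sq, ← hsq]
  rw [hEq, ← integral_sub hITsq hIT2]
  by_cases h2m : m + m ≤ n
  · calc (∫ ω, ((tinj F (z ω)) ^ 2 - tinj (blockAdd F F) (z ω)))
        ≤ ∫ _ω, (6 * (m : ℝ) ^ 2 / n) :=
          integral_mono (hITsq.sub hIT2) (integrable_const _)
            (fun ω => pointwise_bound hn h2m F (hzbd ω))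
      _ = 6 * (m : ℝ) ^ 2 / n := by simp
  · -- degenerate case: no injections `Fin (m+m) → Fin n`, so `tinj (F ⊕ F) = 0`
    have hzero : ∀ ω, tinj (blockAdd F F) (z ω) = 0 := by
      intro ω
      rw [tinj_eq]
      have hempty : (Finset.univ.filter
          (fun φ : Fin (m+m) → Fin n => Function.Injective φ)) = ∅ := by
        rw [Finset.filter_eq_empty_iff]
        intro φ _
        intro hinj
        have := Fintype.card_le_of_injective φ hinj
        simp only [Fintype.card_fin] at this
        omega
      rw [hempty]
      simp
    have hm1 : 1 ≤ m := by omega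
    calc (∫ ω, ((tinj F (z ω)) ^ 2 - tinj (blockAdd F F) (z ω)))
        = ∫ ω, (tinj F (z ω)) ^ 2 := by
          refine integral_congr_ae (Filter.Eventually.of_forall fun ω => ?_)
          show tinj F (z ω) ^ 2 - tinj (blockAdd F F) (z ω) = tinj F (z ω) ^ 2
          rw [hzero ω, sub_zero]
      _ ≤ ∫ _ω, (1:ℝ) := by
          refine integral_mono hITsq (integrable_const 1) fun ω => ?_
          have := hTbd ω
          nlinarith [abs_nonneg (tinj F (z ω)), sq_abs (tinj F (z ω))]
      _ = 1 := by simp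
      _ ≤ 6 * (m : ℝ) ^ 2 / n := by
          rw [le_div_iff₀ hn']
          have hnm' : n < m + m := by omega
          have hnm : (n:ℝ) < (m:ℝ) + (m:ℝ) := by exact_mod_cast hnm'
          have hm1' : (1:ℝ) ≤ (m:ℝ) := by exact_mod_cast hm1
          nlinarith
end
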